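/- arXiv:2404.05497 — 5 statements merged into one kernel-verified Lean document; each statement's English description precedes it below -/
import Mathlib

section
/- For any finite simple graph G and natural numbers x ∈ ℕ, y ≥ 1, Z_G(x, -y) = Σ over compatible (x, y-1)-pairs of colorings (c_V, c_E) of G of (-1)^{number of edges e with c_E(e) ≠ 0}. -/
open SimpleGraph Finset

/-- The number of connected components of a graph. -/
noncomputable def cc {V : Type} (G : SimpleGraph V) : ℕ := Nat.card G.ConnectedComponent

/-- The Fortuin–Kasteleyn polynomial `Z_G(x,y) = Σ_{F ⊆ E(G)} x^{cc(G|F)} y^{|F|}`. -/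
noncomputable def ZG {V : Type} [Fintype V] [DecidableEq V] (G : SimpleGraph V)
    [DecidableRel G.Adj] (x y : ℚ) : ℚ :=
  ∑ F ∈ G.edgeFinset.powerset,
    x ^ cc (SimpleGraph.fromEdgeSet (F : Set (Sym2 V))) * y ^ F.card

/-- The Tutte polynomial
`T_G(x,y) = Σ_{F ⊆ E(G)} (x-1)^{r(G)-r(G|F)} (y-1)^{n(G|F)}`, where
`r(G)-r(G|F) = cc(G|F) - cc(G)` and `n(G|F) = |F| + cc(G|F) - |V(G)|`. -/
noncomputable def TG {V : Type} [Fintype V] [DecidableEq V] (G : SimpleGraph V)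
    [DecidableRel G.Adj] (x y : ℚ) : ℚ :=
  ∑ F ∈ G.edgeFinset.powerset,
    (x - 1) ^ (cc (SimpleGraph.fromEdgeSet (F : Set (Sym2 V))) - cc G) *
    (y - 1) ^ (F.card + cc (SimpleGraph.fromEdgeSet (F : Set (Sym2 V))) - Fintype.card V)

section Auxiliary

open scoped Classical

/-- `x^(number of components of H)` counts the colorings `V → Fin x` that are
constant on each component (equivalently, monochromatic on each edge). -/
private lemma card_pow_cc' {V : Type} [Fintype V] (H : SimpleGraph V) (x : ℕ) :
    x ^ Nat.card H.ConnectedComponent =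
      Nat.card {c : V → Fin x // ∀ v w, H.Adj v w → c v = c w} := by
  classical
  have walkaux : ∀ (c : {c : V → Fin x // ∀ v w, H.Adj v w → c v = c w}) {v w : V},
      H.Walk v w → c.1 v = c.1 w := by
    intro c v w p
    induction p with
    | nil => rfl
    | cons ha _ ih => exact (c.2 _ _ ha).trans ih
  have e : (H.ConnectedComponent → Fin x) ≃
      {c : V → Fin x // ∀ v w, H.Adj v w → c v = c w} :=
    { toFun := fun f => ⟨fun v => f (H.connectedComponentMk v), fun v w h =>
        congrArg f (ConnectedComponent.sound h.reachable)⟩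
      invFun := fun c => ConnectedComponent.lift c.1 (fun v w p _ => walkaux c p)
      left_inv := fun f => by
        funext comp
        exact comp.ind (fun v => rfl)
      right_inv := fun c => by
        ext v
        rfl }
  calc x ^ Nat.card H.ConnectedComponent
      = Nat.card (H.ConnectedComponent → Fin x) := by
        rw [Nat.card_eq_fintype_card, Nat.card_eq_fintype_card,
          Fintype.card_fun, Fintype.card_fin]
    _ = _ := Nat.card_congr e

private lemma card_fin_iff (y : ℕ) (hy : 1 ≤ y) (P : Prop) [Decidable P] :
    Nat.card {a : Fin y // ((a : ℕ) ≠ 0 ↔ P)} = if P then y - 1 else 1 := by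
  classical
  rw [Nat.card_eq_fintype_card]
  by_cases hP : P
  · rw [if_pos hP]
    have h1 : Fintype.card {a : Fin y // (a : ℕ) = 0} = 1 := by
      rw [Fintype.card_congr (Equiv.subtypeEquivRight
        (q := fun a : Fin y => a = ⟨0, hy⟩) (fun a => by simp [Fin.ext_iff]))]
      exact Fintype.card_subtype_eq _
    calc Fintype.card {a : Fin y // ((a : ℕ) ≠ 0 ↔ P)}
        = Fintype.card {a : Fin y // ¬ (a : ℕ) = 0} :=
          Fintype.card_congr (Equiv.subtypeEquivRight (fun a => by simp [hP]))
      _ = Fintype.card (Fin y) - Fintype.card {a : Fin y // (a : ℕ) = 0} :=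
          Fintype.card_subtype_compl _
      _ = y - 1 := by rw [h1, Fintype.card_fin]
  · rw [if_neg hP]
    calc Fintype.card {a : Fin y // ((a : ℕ) ≠ 0 ↔ P)}
        = Fintype.card {a : Fin y // a = ⟨0, hy⟩} :=
          Fintype.card_congr (Equiv.subtypeEquivRight (fun a => by simp [hP, Fin.ext_iff]))
      _ = 1 := Fintype.card_subtype_eq _

private lemma sum_powerset_pow_card {α : Type*} [DecidableEq α] (s : Finset α) (r : ℚ) :
    ∑ F ∈ s.powerset, r ^ F.card = (r + 1) ^ s.card := by
  have h := Finset.prod_add (fun _ : α => r) (fun _ : α => (1 : ℚ)) s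
  simp only [Finset.prod_const, one_pow, mul_one] at h
  rw [← h]

private lemma sum_ite_card {α : Type*} [Fintype α] (P : α → Prop) [DecidablePred P] (t : ℚ) :
    ∑ a : α, (if P a then t else 0) = (Nat.card {a // P a} : ℚ) * t := by
  rw [Nat.card_eq_fintype_card, Fintype.card_subtype, ← Finset.sum_filter,
    Finset.sum_const, nsmul_eq_mul]

private lemma card_compatible {E : Type*} [Fintype E] (y : ℕ) (hy : 1 ≤ y) (D : E → Prop)
    [DecidablePred D] :
    Nat.card {cE : E → Fin y // ∀ e, ((cE e : ℕ) ≠ 0 ↔ D e)} =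
      (y - 1) ^ (Finset.univ.filter D).card := by
  calc Nat.card {cE : E → Fin y // ∀ e, ((cE e : ℕ) ≠ 0 ↔ D e)}
      = Nat.card (∀ e : E, {a : Fin y // ((a : ℕ) ≠ 0 ↔ D e)}) :=
        Nat.card_congr (Equiv.subtypePiEquivPi
          (p := fun (e : E) (a : Fin y) => ((a : ℕ) ≠ 0 ↔ D e)))
    _ = ∏ e : E, Nat.card {a : Fin y // ((a : ℕ) ≠ 0 ↔ D e)} := Nat.card_pi
    _ = ∏ e : E, (if D e then y - 1 else 1) :=
        Finset.prod_congr rfl (fun e _ => card_fin_iff y hy _)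
    _ = (y - 1) ^ (Finset.univ.filter D).card := by
        rw [Finset.prod_ite, Finset.prod_const, Finset.prod_const, one_pow, mul_one]

end Auxiliary

open scoped Classical in
/-- For x ∈ ℕ and y ≥ 1, Z_G(x,-y) is the signed sum over compatible
(x, y-1)-pairs of colorings (c_V, c_E) of (-1)^(number of edges e with c_E(e) ≠ 0);
here c_E takes values in {0, …, y-1}, represented by Fin y. -/
theorem FK_negative_y_signed_pairs {V : Type} [Fintype V] [DecidableEq V]
    (G : SimpleGraph V) [DecidableRel G.Adj] (x y : ℕ) (hy : 1 ≤ y) :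
    ZG G (x : ℚ) (-(y : ℚ)) =
      ∑ p : (V → Fin x) × (G.edgeSet → Fin y),
        if (∀ v w (h : G.Adj v w),
            ((p.2 ⟨s(v, w), G.mem_edgeSet.mpr h⟩).val ≠ 0 ↔ p.1 v = p.1 w))
        then (-1 : ℚ) ^ (Finset.univ.filter fun e : G.edgeSet => (p.2 e).val ≠ 0).card
        else 0 := by
  classical
  -- `M c` : the monochromatic edges of `G` under the vertex coloring `c`
  set M : (V → Fin x) → Finset (Sym2 V) :=
    fun c => G.edgeFinset.filter (fun e => (Sym2.map c e).IsDiag) with hM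
  -- Step 1: the left-hand side equals `∑ c, (1-y)^{|M c|}`
  have hL : ZG G (x : ℚ) (-(y : ℚ)) = ∑ c : V → Fin x, (1 - (y : ℚ)) ^ (M c).card := by
    unfold ZG
    have step1 : ∀ F ∈ G.edgeFinset.powerset,
        (x : ℚ) ^ cc (SimpleGraph.fromEdgeSet (F : Set (Sym2 V))) * (-(y : ℚ)) ^ F.card =
        ∑ c : V → Fin x,
          (if ∀ e ∈ F, (Sym2.map c e).IsDiag then (-(y : ℚ)) ^ F.card else 0) := by
      intro F _
      rw [sum_ite_card]
      congr 1
      have hnat : x ^ cc (SimpleGraph.fromEdgeSet (F : Set (Sym2 V))) =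
          Nat.card {c : V → Fin x // ∀ e ∈ F, (Sym2.map c e).IsDiag} := by
        rw [cc, card_pow_cc']
        refine Nat.card_congr (Equiv.subtypeEquivRight (fun c => ?_))
        constructor
        · intro h e he
          induction e using Sym2.ind with
          | _ v w =>
            simp only [Sym2.map_pair_eq, Sym2.mk_isDiag_iff]
            by_cases hvw : v = w
            · exact congrArg c hvw
            · exact h v w (by simp [SimpleGraph.fromEdgeSet_adj, he, hvw])
        · intro h v w hadj
          rw [SimpleGraph.fromEdgeSet_adj] at hadj
          have := h _ hadj.1
          simpa [Sym2.map_pair_eq, Sym2.mk_isDiag_iff] using this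
      exact_mod_cast congrArg (Nat.cast : ℕ → ℚ) hnat
    rw [Finset.sum_congr rfl step1, Finset.sum_comm]
    refine Finset.sum_congr rfl (fun c _ => ?_)
    rw [← Finset.sum_filter]
    have hps : G.edgeFinset.powerset.filter (fun F => ∀ e ∈ F, (Sym2.map c e).IsDiag) =
        (M c).powerset := by
      ext F
      simp only [Finset.mem_filter, Finset.mem_powerset, hM, Finset.subset_iff,
        Finset.mem_filter]
      constructor
      · rintro ⟨h1, h2⟩ e he
        exact ⟨h1 he, h2 e he⟩
      · intro h
        exact ⟨fun {e} he => (h he).1, fun e he => (h he).2⟩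
    rw [hps, sum_powerset_pow_card, neg_add_eq_sub]
  rw [hL, Fintype.sum_prod_type]
  refine Finset.sum_congr rfl (fun c _ => ?_)
  -- Step 2: for fixed `c`, the inner sum over edge colorings equals `(1-y)^{|M c|}`
  have hcond : ∀ cE : G.edgeSet → Fin y,
      (∀ v w (h : G.Adj v w), ((cE ⟨s(v, w), G.mem_edgeSet.mpr h⟩).val ≠ 0 ↔ c v = c w)) ↔
      (∀ e : G.edgeSet, ((cE e).val ≠ 0 ↔ (Sym2.map c e.val).IsDiag)) := by
    intro cE
    constructor
    · rintro h ⟨e, he⟩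
      induction e using Sym2.ind with
      | _ v w =>
        simpa [Sym2.map_pair_eq, Sym2.mk_isDiag_iff] using h v w (G.mem_edgeSet.mp he)
    · intro h v w hvw
      simpa [Sym2.map_pair_eq, Sym2.mk_isDiag_iff] using h ⟨s(v, w), G.mem_edgeSet.mpr hvw⟩
  -- number of monochromatic edges, counted inside the subtype of edges
  set me : ℕ := (Finset.univ.filter fun e : G.edgeSet => (Sym2.map c e.val).IsDiag).card
    with hme
  have hstep : ∀ cE : G.edgeSet → Fin y,
      (if (∀ v w (h : G.Adj v w),
          ((cE ⟨s(v, w), G.mem_edgeSet.mpr h⟩).val ≠ 0 ↔ c v = c w))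
        then (-1 : ℚ) ^ (Finset.univ.filter fun e : G.edgeSet => (cE e).val ≠ 0).card
        else 0) =
      (if (∀ e : G.edgeSet, ((cE e).val ≠ 0 ↔ (Sym2.map c e.val).IsDiag))
        then (-1 : ℚ) ^ me
        else 0) := by
    intro cE
    by_cases hC : ∀ e : G.edgeSet, ((cE e).val ≠ 0 ↔ (Sym2.map c e.val).IsDiag)
    · rw [if_pos ((hcond cE).mpr hC), if_pos hC]
      congr 2
      exact Finset.filter_congr (fun e _ => hC e)
    · rw [if_neg (fun h => hC ((hcond cE).mp h)), if_neg hC]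
  rw [Finset.sum_congr rfl (fun cE _ => hstep cE), sum_ite_card, card_compatible y hy]
  -- identify the two edge counts
  have hMe : me = (M c).card := by
    rw [hme, hM]
    refine Finset.card_bij (fun e _ => e.val) ?_ ?_ ?_
    · intro e he
      rw [Finset.mem_filter] at he ⊢
      exact ⟨SimpleGraph.mem_edgeFinset.mpr e.2, he.2⟩
    · intro a _ b _ h
      exact Subtype.ext h
    · intro b hb
      rw [Finset.mem_filter, SimpleGraph.mem_edgeFinset] at hb
      exact ⟨⟨b, hb.1⟩, Finset.mem_filter.mpr ⟨Finset.mem_univ _, hb.2⟩, rfl⟩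
  rw [← hme, ← hMe, Nat.cast_pow, Nat.cast_sub hy, Nat.cast_one, ← mul_pow]
  ring_nf
end

section
/- For any finite simple graph G, T_G(0,2) equals the number of orientations of G in which every connected component of G is strongly connected. Equivalently, Σ_{F ⊆ E(G)} (-1)^{cc(G|F)} = (-1)^{cc(G)} · |{orientations H of G : every connected component of H is strongly connected}|. -/
open SimpleGraph Finset

/-- An orientation of a simple graph: each edge gets exactly one direction. -/
structure GraphOrientation {V : Type} (G : SimpleGraph V) where
  rel : V → V → Prop
  sub : ∀ v w, rel v w → G.Adj v w
  exactlyOne : ∀ v w, G.Adj v w → (rel v w ↔ ¬ rel w v)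

namespace TutteAux

open Relation

lemma rt_bind {α : Type*} {R S : α → α → Prop} (h : ∀ a b, R a b → ReflTransGen S a b)
    {x y : α} (hxy : ReflTransGen R x y) : ReflTransGen S x y := by
  induction hxy with
  | refl => exact .refl
  | tail _ hab ih => exact ih.trans (h _ _ hab)

lemma rt_drop_pair {α : Type*} {R : α → α → Prop} {p q x y : α}
    (h : ReflTransGen (fun a b => R a b ∨ (a = p ∧ b = q)) x y) :
    ReflTransGen R x y ∨ (ReflTransGen R x p ∧ ReflTransGen R q y) := by
  induction h with
  | refl => exact Or.inl .refl
  | tail _ hab ih =>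
    rcases hab with hab | ⟨rfl, rfl⟩
    · rcases ih with h1 | ⟨h1, h2⟩
      · exact Or.inl (h1.tail hab)
      · exact Or.inr ⟨h1, h2.tail hab⟩
    · rcases ih with h1 | ⟨h1, h2⟩
      · exact Or.inr ⟨h1, .refl⟩
      · exact Or.inr ⟨h1, .refl⟩

lemma rtT {α : Type*} {R : α → α → Prop} {u v x y : α}
    (h : ReflTransGen (fun a b => R a b ∨ (a = u ∧ b = v) ∨ (a = v ∧ b = u)) x y) :
    ReflTransGen R x y ∨ (ReflTransGen R x u ∧ ReflTransGen R v y) ∨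
      (ReflTransGen R x v ∧ ReflTransGen R u y) := by
  induction h with
  | refl => exact Or.inl .refl
  | tail _ hab ih =>
    rcases hab with hab | ⟨rfl, rfl⟩ | ⟨rfl, rfl⟩
    · rcases ih with h1 | ⟨h1, h2⟩ | ⟨h1, h2⟩
      · exact Or.inl (h1.tail hab)
      · exact Or.inr (Or.inl ⟨h1, h2.tail hab⟩)
      · exact Or.inr (Or.inr ⟨h1, h2.tail hab⟩)
    · rcases ih with h1 | ⟨h1, h2⟩ | ⟨h1, h2⟩
      · exact Or.inr (Or.inl ⟨h1, .refl⟩)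
      · exact Or.inr (Or.inl ⟨h1, .refl⟩)
      · exact Or.inl h1
    · rcases ih with h1 | ⟨h1, h2⟩ | ⟨h1, h2⟩
      · exact Or.inr (Or.inr ⟨h1, .refl⟩)
      · exact Or.inl h1
      · exact Or.inr (Or.inr ⟨h1, .refl⟩)

lemma exists_crossing {α : Type*} {R : α → α → Prop} {S : Set α} {x : α} :
    ∀ {y : α}, ReflTransGen R x y → x ∈ S → y ∉ S →
      ∃ a b, R a b ∧ a ∈ S ∧ b ∉ S ∧ ReflTransGen R x a := by
  intro y h
  induction h with
  | refl => intro hx hy; exact absurd hx hy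
  | @tail b c hxb hbc ih =>
    intro hx hc
    by_cases hb : b ∈ S
    · exact ⟨b, c, hbc, hb, hc, hxb⟩
    · exact ih hx hb

variable {V : Type} [Fintype V] [DecidableEq V]

lemma reach_down {G H : SimpleGraph V} (hrev : ∀ a b, H.Adj a b → G.Reachable a b)
    {x y : V} (h : H.Reachable x y) : G.Reachable x y := by
  rw [reachable_iff_reflTransGen] at h ⊢
  exact rt_bind (fun a b hab => (reachable_iff_reflTransGen a b).mp (hrev a b hab)) h

lemma cc_le_of_le {G H : SimpleGraph V} (h : G ≤ H) : cc H ≤ cc G := by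
  apply Nat.card_le_card_of_surjective
    (SimpleGraph.ConnectedComponent.map (SimpleGraph.Hom.ofLE h))
  intro c
  refine c.ind fun v => ?_
  exact ⟨G.connectedComponentMk v, SimpleGraph.ConnectedComponent.map_mk _ _⟩

lemma cc_eq_of_le {G H : SimpleGraph V} (h : G ≤ H)
    (hrev : ∀ a b, H.Adj a b → G.Reachable a b) : cc G = cc H := by
  apply Nat.card_congr
  refine Equiv.ofBijective
    (SimpleGraph.ConnectedComponent.map (SimpleGraph.Hom.ofLE h)) ⟨?_, ?_⟩
  · intro c c'
    refine c.ind fun x => c'.ind fun y => ?_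
    intro hxy
    simp only [SimpleGraph.ConnectedComponent.map_mk] at hxy
    rw [SimpleGraph.ConnectedComponent.eq] at hxy ⊢
    exact reach_down hrev hxy
  · intro c
    exact c.ind fun w => ⟨G.connectedComponentMk w, SimpleGraph.ConnectedComponent.map_mk _ _⟩

lemma cc_bridge {G H : SimpleGraph V} (h : G ≤ H) {u v : V} (huv : H.Adj u v)
    (hadj : ∀ a b, H.Adj a b → G.Adj a b ∨ (a = u ∧ b = v) ∨ (a = v ∧ b = u))
    (hnr : ¬ G.Reachable u v) : cc G = cc H + 1 := by
  classical
  have collapse : ∀ a b : V, ReflTransGen (fun a b => G.Reachable a b) a b → G.Reachable a b := by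
    intro a b hab
    rw [reachable_iff_reflTransGen]
    exact rt_bind (fun a b hab => (reachable_iff_reflTransGen a b).mp hab) hab
  have hkey : ∀ x y : V, H.Reachable x y →
      G.Reachable x y ∨ (G.Reachable x u ∧ G.Reachable v y) ∨
        (G.Reachable x v ∧ G.Reachable u y) := by
    intro x y hxy
    rw [reachable_iff_reflTransGen] at hxy
    have h2 : ReflTransGen (fun a b => G.Reachable a b ∨ (a = u ∧ b = v) ∨ (a = v ∧ b = u)) x y :=
      ReflTransGen.mono (fun a b hab => by
        rcases hadj a b hab with h1 | h1 | h1
        · exact Or.inl h1.reachable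
        · exact Or.inr (Or.inl h1)
        · exact Or.inr (Or.inr h1)) _ _ hxy
    rcases rtT h2 with h3 | ⟨h3, h4⟩ | ⟨h3, h4⟩
    · exact Or.inl (collapse _ _ h3)
    · exact Or.inr (Or.inl ⟨collapse _ _ h3, collapse _ _ h4⟩)
    · exact Or.inr (Or.inr ⟨collapse _ _ h3, collapse _ _ h4⟩)
  set φ := SimpleGraph.ConnectedComponent.map (SimpleGraph.Hom.ofLE h) with hφ
  set cv := G.connectedComponentMk v with hcv
  set cu := G.connectedComponentMk u with hcu
  have hφmk : ∀ x : V, φ (G.connectedComponentMk x) = H.connectedComponentMk x := by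
    intro x
    exact SimpleGraph.ConnectedComponent.map_mk _ _
  have hinj : ∀ c c' : G.ConnectedComponent, φ c = φ c' →
      c = c' ∨ (c = cu ∧ c' = cv) ∨ (c = cv ∧ c' = cu) := by
    refine SimpleGraph.ConnectedComponent.ind fun x => SimpleGraph.ConnectedComponent.ind fun y => ?_
    intro hcc
    rw [hφmk, hφmk, SimpleGraph.ConnectedComponent.eq] at hcc
    rcases hkey _ _ hcc with h1 | ⟨h1, h2⟩ | ⟨h1, h2⟩
    · exact Or.inl (SimpleGraph.ConnectedComponent.sound h1)
    · exact Or.inr (Or.inl ⟨SimpleGraph.ConnectedComponent.sound h1,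
        (SimpleGraph.ConnectedComponent.sound h2.symm)⟩)
    · exact Or.inr (Or.inr ⟨SimpleGraph.ConnectedComponent.sound h1,
        (SimpleGraph.ConnectedComponent.sound h2.symm)⟩)
  have hcune : cu ≠ cv := by
    intro hh
    rw [hcu, hcv, SimpleGraph.ConnectedComponent.eq] at hh
    exact hnr hh
  have e1 : {c : G.ConnectedComponent // c ≠ cv} ≃ H.ConnectedComponent := by
    refine Equiv.ofBijective (fun c => φ c.1) ⟨?_, ?_⟩
    · rintro ⟨c, hc⟩ ⟨c', hc'⟩ hcc
      simp only at hcc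
      refine Subtype.ext ?_
      rcases hinj c c' hcc with h1 | ⟨h1, h2⟩ | ⟨h1, h2⟩
      · exact h1
      · exact absurd h2 hc'
      · exact absurd h1 hc
    · refine SimpleGraph.ConnectedComponent.ind fun x => ?_
      by_cases hvx : G.Reachable v x
      · refine ⟨⟨cu, hcune⟩, ?_⟩
        simp only [hcu, hφmk]
        rw [SimpleGraph.ConnectedComponent.eq]
        exact (huv.reachable).trans (hvx.mono h)
      · refine ⟨⟨G.connectedComponentMk x, ?_⟩, ?_⟩
        · intro hcx
          rw [hcv, SimpleGraph.ConnectedComponent.eq] at hcx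
          exact hvx hcx.symm
        · simp only [hφmk]
  have e2 : G.ConnectedComponent ≃ Option {c : G.ConnectedComponent // c ≠ cv} :=
    (Equiv.optionSubtypeNe cv).symm
  show Nat.card G.ConnectedComponent = Nat.card H.ConnectedComponent + 1
  rw [Nat.card_congr e2, Finite.card_option, Nat.card_congr e1]

def sOri (S : Finset (Sym2 V)) : Type :=
  {D : V → V → Prop // (∀ a b, D a b → s(a, b) ∈ S) ∧ ∀ a b, s(a, b) ∈ S → (D a b ↔ ¬ D b a)}

instance (S : Finset (Sym2 V)) : Finite (sOri S) := by unfold sOri; infer_instance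

def arcs (D : V → V → Prop) (A : Finset (Sym2 V)) : V → V → Prop :=
  fun a b => D a b ∨ s(a, b) ∈ A

def Good (E A : Finset (Sym2 V)) (D : V → V → Prop) : Prop :=
  ∀ x y : V, (SimpleGraph.fromEdgeSet (E : Set (Sym2 V))).Reachable x y →
    ReflTransGen (arcs D A) x y

noncomputable def NN (E A : Finset (Sym2 V)) : ℕ :=
  Nat.card {D : sOri (E \ A) // Good E A D.1}

noncomputable def ff (E A : Finset (Sym2 V)) : ℚ :=
  ∑ F ∈ (E \ A).powerset,
    (-1 : ℚ) ^ cc (SimpleGraph.fromEdgeSet ((F ∪ A : Finset (Sym2 V)) : Set (Sym2 V)))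

lemma finset_adj {E : Finset (Sym2 V)} {a b : V} :
    (SimpleGraph.fromEdgeSet (E : Set (Sym2 V))).Adj a b ↔ s(a, b) ∈ E ∧ a ≠ b := by
  rw [SimpleGraph.fromEdgeSet_adj]; simp

section Core

variable {E A : Finset (Sym2 V)} {u v : V}

/-- For `D'` an orientation of `E \ insert e A`, the bidirected-`e` arcs decompose. -/
lemma arcs_insert_iff (D' : sOri (E \ insert (s(u, v)) A)) (hne : u ≠ v) (a b : V) :
    arcs D'.1 (insert (s(u, v)) A) a b ↔
      arcs D'.1 A a b ∨ (a = u ∧ b = v) ∨ (a = v ∧ b = u) := by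
  unfold arcs
  simp only [Finset.mem_insert]
  constructor
  · rintro (h | h | h)
    · exact Or.inl (Or.inl h)
    · rcases Sym2.eq_iff.mp h with ⟨rfl, rfl⟩ | ⟨rfl, rfl⟩
      · exact Or.inr (Or.inl ⟨rfl, rfl⟩)
      · exact Or.inr (Or.inr ⟨rfl, rfl⟩)
    · exact Or.inl (Or.inr h)
  · rintro ((h | h) | ⟨rfl, rfl⟩ | ⟨rfl, rfl⟩)
    · exact Or.inl h
    · exact Or.inr (Or.inr h)
    · exact Or.inr (Or.inl rfl)
    · exact Or.inr (Or.inl (Sym2.eq_swap))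

lemma D'_not_on_e (D' : sOri (E \ insert (s(u, v)) A)) {a b : V}
    (hab : s(a, b) = s(u, v)) : ¬ D'.1 a b := by
  intro hD
  have := D'.2.1 a b hD
  rw [hab] at this
  simp [Finset.mem_sdiff] at this

/-- each arc of `arcs D'.1 A` joins vertices adjacent in `fromEdgeSet (E.erase e)`. -/
lemma arcs_reach_erase (D' : sOri (E \ insert (s(u, v)) A)) (hA : A ⊆ E)
    (heA : s(u, v) ∉ A) (hd : ∀ x ∈ E, ¬ x.IsDiag) {a b : V}
    (hab : arcs D'.1 A a b) :
    (SimpleGraph.fromEdgeSet ((E.erase (s(u, v))) : Set (Sym2 V))).Reachable a b := by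
  have hmem : s(a, b) ∈ E.erase (s(u, v)) ∧ a ≠ b := by
    rcases hab with h | h
    · have h1 := D'.2.1 a b h
      rw [Finset.mem_sdiff, Finset.mem_insert] at h1
      refine ⟨Finset.mem_erase.mpr ⟨fun hh => h1.2 (Or.inl hh), h1.1⟩, ?_⟩
      intro rfl'
      exact hd _ h1.1 (by rw [← rfl']; exact Sym2.mk_isDiag_iff.mpr rfl)
    · have h1 : s(a, b) ∈ E := hA h
      refine ⟨Finset.mem_erase.mpr ⟨fun hh => heA (hh ▸ h), h1⟩, ?_⟩
      intro rfl'
      exact hd _ h1 (by rw [← rfl']; exact Sym2.mk_isDiag_iff.mpr rfl)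
  exact (finset_adj.mpr ⟨hmem.1, hmem.2⟩).reachable

lemma rt_arcs_reach_erase (D' : sOri (E \ insert (s(u, v)) A)) (hA : A ⊆ E)
    (heA : s(u, v) ∉ A) (hd : ∀ x ∈ E, ¬ x.IsDiag) {a b : V}
    (hab : ReflTransGen (arcs D'.1 A) a b) :
    (SimpleGraph.fromEdgeSet ((E.erase (s(u, v))) : Set (Sym2 V))).Reachable a b := by
  rw [reachable_iff_reflTransGen]
  refine rt_bind (fun a b h => ?_) hab
  rw [← reachable_iff_reflTransGen]
  exact arcs_reach_erase D' hA heA hd h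

/-- Non-bridge: reachability in `E` implies reachability in `E.erase e`. -/
lemma reachE_erase (he : s(u, v) ∈ E)
    (hconn : (SimpleGraph.fromEdgeSet ((E.erase (s(u, v))) : Set (Sym2 V))).Reachable u v)
    {x y : V} (h : (SimpleGraph.fromEdgeSet (E : Set (Sym2 V))).Reachable x y) :
    (SimpleGraph.fromEdgeSet ((E.erase (s(u, v))) : Set (Sym2 V))).Reachable x y := by
  refine reach_down (fun a b hab => ?_) h
  rw [finset_adj] at hab
  by_cases hh : s(a, b) = s(u, v)
  · rcases Sym2.eq_iff.mp hh with ⟨rfl, rfl⟩ | ⟨rfl, rfl⟩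
    · exact hconn
    · exact hconn.symm
  · exact (finset_adj.mpr ⟨Finset.mem_erase.mpr ⟨hh, hab.1⟩, hab.2⟩).reachable

lemma erase_le_E : (SimpleGraph.fromEdgeSet ((E.erase (s(u, v))) : Set (Sym2 V))) ≤
    SimpleGraph.fromEdgeSet (E : Set (Sym2 V)) :=
  SimpleGraph.fromEdgeSet_mono (by exact_mod_cast Finset.erase_subset _ _)

def ext (D : V → V → Prop) (p q : V) : V → V → Prop := fun a b => D a b ∨ (a = p ∧ b = q)

def restr (D : V → V → Prop) (e : Sym2 V) : V → V → Prop := fun a b => D a b ∧ s(a, b) ≠ e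

/-- Extension of an orientation of `E \ insert e A` by one direction of `e`. -/
def extO (D' : sOri (E \ insert (s(u, v)) A)) (p q : V) (hpq : s(p, q) = s(u, v)) (hp : p ≠ q)
    (he : s(u, v) ∈ E) (heA : s(u, v) ∉ A) : sOri (E \ A) := by
  refine ⟨ext D'.1 p q, ?_, ?_⟩
  · rintro a b (h | ⟨rfl, rfl⟩)
    · have h1 := D'.2.1 a b h
      rw [Finset.mem_sdiff, Finset.mem_insert] at h1
      exact Finset.mem_sdiff.mpr ⟨h1.1, fun hh => h1.2 (Or.inr hh)⟩
    · rw [hpq]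
      exact Finset.mem_sdiff.mpr ⟨he, heA⟩
  · intro a b hmem
    by_cases hab : s(a, b) = s(u, v)
    · have hDab := D'_not_on_e D' hab
      have hDba := D'_not_on_e D' (Sym2.eq_swap.trans hab)
      have hh : s(a, b) = s(p, q) := hab.trans hpq.symm
      rcases Sym2.eq_iff.mp hh with ⟨rfl, rfl⟩ | ⟨rfl, rfl⟩
      · constructor
        · rintro - (h | ⟨rfl, -⟩)
          · exact hDba h
          · exact hp rfl
        · intro _
          exact Or.inr ⟨rfl, rfl⟩
      · constructor
        · rintro (h | ⟨rfl, -⟩) -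
          · exact hDab h
          · exact hp rfl
        · intro hcon
          exact absurd (Or.inr ⟨rfl, rfl⟩) hcon
    · have hmem' : s(a, b) ∈ E \ insert (s(u, v)) A := by
        rw [Finset.mem_sdiff] at hmem ⊢
        rw [Finset.mem_insert]
        exact ⟨hmem.1, fun hh => hh.elim hab hmem.2⟩
      have h1 := D'.2.2 a b hmem'
      have hpair1 : ¬ (a = p ∧ b = q) := by
        rintro ⟨rfl, rfl⟩; exact hab hpq
      have hpair2 : ¬ (b = p ∧ a = q) := by
        rintro ⟨rfl, rfl⟩; exact hab (Sym2.eq_swap.trans hpq)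
      unfold ext
      constructor
      · rintro (h | h)
        · rintro (h2 | h2)
          · exact (h1.mp h) h2
          · exact hpair2 h2
        · exact absurd h hpair1
      · intro h2
        by_cases h3 : D'.1 a b
        · exact Or.inl h3
        · exfalso
          apply h2
          exact Or.inl (by rwa [h1, not_not] at h3)

/-- Restriction of an orientation of `E \ A` to `E \ insert e A`. -/
def restrO (D : sOri (E \ A)) : sOri (E \ insert (s(u, v)) A) := by
  refine ⟨restr D.1 (s(u, v)), ?_, ?_⟩
  · rintro a b ⟨h, hne⟩
    have h1 := D.2.1 a b h
    rw [Finset.mem_sdiff] at h1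
    rw [Finset.mem_sdiff, Finset.mem_insert]
    exact ⟨h1.1, fun hh => hh.elim hne h1.2⟩
  · intro a b hmem
    rw [Finset.mem_sdiff, Finset.mem_insert] at hmem
    have hnz : s(a, b) ≠ s(u, v) := fun hh => hmem.2 (Or.inl hh)
    have h1 := D.2.2 a b (Finset.mem_sdiff.mpr ⟨hmem.1, fun hh => hmem.2 (Or.inr hh)⟩)
    unfold restr
    constructor
    · rintro ⟨h, -⟩ ⟨h2, -⟩
      exact (h1.mp h) h2
    · intro h2
      exact ⟨h1.mpr fun h3 => h2 ⟨h3, fun hh => hnz (Sym2.eq_swap.trans hh)⟩, hnz⟩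

lemma good_erase_ext (D' : sOri (E \ insert (s(u, v)) A)) (he : s(u, v) ∈ E)
    (hconn : (SimpleGraph.fromEdgeSet ((E.erase (s(u, v))) : Set (Sym2 V))).Reachable u v)
    (p q : V) (h' : Good (E.erase (s(u, v))) A D'.1) :
    Good E A (ext D'.1 p q) := by
  intro x y hxy
  have h2 := h' x y (reachE_erase he hconn hxy)
  exact ReflTransGen.mono (fun a b hab => by unfold arcs ext at *; tauto) _ _ h2

lemma good_to_bi (D : sOri (E \ A)) (hg : Good E A D.1) :
    Good E (insert (s(u, v)) A) (restr D.1 (s(u, v))) := by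
  intro x y hxy
  refine rt_bind (fun a b hab => ?_) (hg x y hxy)
  rcases hab with h | h
  · by_cases hh : s(a, b) = s(u, v)
    · exact ReflTransGen.single (Or.inr (Finset.mem_insert.mpr (Or.inl hh)))
    · exact ReflTransGen.single (Or.inl ⟨h, hh⟩)
  · exact ReflTransGen.single (Or.inr (Finset.mem_insert_of_mem h))

lemma erase_good_to_bi (D' : sOri (E \ insert (s(u, v)) A))
    (h' : Good (E.erase (s(u, v))) A D'.1) :
    Good E (insert (s(u, v)) A) D'.1 := by
  intro x y hxy
  rw [reachable_iff_reflTransGen] at hxy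
  refine rt_bind (fun a b hab => ?_) hxy
  by_cases hh : s(a, b) = s(u, v)
  · exact ReflTransGen.single (Or.inr (Finset.mem_insert.mpr (Or.inl hh)))
  · rw [finset_adj] at hab
    have h2 := h' a b (finset_adj.mpr ⟨Finset.mem_erase.mpr ⟨hh, hab.1⟩, hab.2⟩).reachable
    exact ReflTransGen.mono (fun a b (hab : arcs D'.1 A a b) => hab.imp id Finset.mem_insert_of_mem) _ _ h2

lemma bi_good_to_erase (D' : sOri (E \ insert (s(u, v)) A)) (hne : u ≠ v)
    (hA : A ⊆ E) (heA : s(u, v) ∉ A) (hd : ∀ x ∈ E, ¬ x.IsDiag)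
    (hnc : ¬ (SimpleGraph.fromEdgeSet ((E.erase (s(u, v))) : Set (Sym2 V))).Reachable u v)
    (hg : Good E (insert (s(u, v)) A) D'.1) :
    Good (E.erase (s(u, v))) A D'.1 := by
  intro x y hxy
  have hE : (SimpleGraph.fromEdgeSet (E : Set (Sym2 V))).Reachable x y := hxy.mono erase_le_E
  have h3 : ReflTransGen (fun a b => arcs D'.1 A a b ∨ (a = u ∧ b = v) ∨ (a = v ∧ b = u)) x y :=
    ReflTransGen.mono (fun a b hab => (arcs_insert_iff D' hne a b).mp hab) _ _ (hg x y hE)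
  rcases rtT h3 with h4 | ⟨h4, h5⟩ | ⟨h4, h5⟩
  · exact h4
  · exfalso
    apply hnc
    have r1 := rt_arcs_reach_erase D' hA heA hd h4
    have r2 := rt_arcs_reach_erase D' hA heA hd h5
    exact (r1.symm.trans hxy).trans r2.symm
  · exfalso
    apply hnc
    have r1 := rt_arcs_reach_erase D' hA heA hd h4
    have r2 := rt_arcs_reach_erase D' hA heA hd h5
    exact r2.trans (hxy.symm.trans r1)

lemma no_good_aux (D : sOri (E \ A)) {p q : V} (hp : p ≠ q)
    (hpE : s(p, q) ∈ E) (hpA : s(p, q) ∉ A) (hd : ∀ x ∈ E, ¬ x.IsDiag) (hA : A ⊆ E)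
    (hnc : ¬ (SimpleGraph.fromEdgeSet ((E.erase (s(p, q))) : Set (Sym2 V))).Reachable p q)
    (hD : D.1 p q) (hg : Good E A D.1) : False := by
  have hmem : s(p, q) ∈ E \ A := Finset.mem_sdiff.mpr ⟨hpE, hpA⟩
  have hqpE : s(q, p) ∈ E := by rwa [Sym2.eq_swap]
  have hqp : ReflTransGen (arcs D.1 A) q p :=
    hg q p (finset_adj.mpr ⟨hqpE, hp.symm⟩).reachable
  have key : ∀ z, ReflTransGen (arcs D.1 A) q z →
      ¬ (SimpleGraph.fromEdgeSet ((E.erase (s(p, q))) : Set (Sym2 V))).Reachable p z := by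
    intro z hz
    induction hz with
    | refl => exact hnc
    | @tail b c hqb hbc ih =>
      intro hpc
      by_cases hbc' : s(b, c) = s(p, q)
      · rcases Sym2.eq_iff.mp hbc' with ⟨h5, h6⟩ | ⟨h5, h6⟩
        · exact ih (by rw [h5])
        · rw [h5, h6] at hbc
          rcases hbc with h | h
          · exact (D.2.2 p q hmem).mp hD h
          · exact hpA (by rwa [Sym2.eq_swap] at h)
      · have hbcE : s(b, c) ∈ E := by
          rcases hbc with h | h
          · exact (Finset.mem_sdiff.mp (D.2.1 _ _ h)).1
          · exact hA h
        have hbne : b ≠ c := fun hh => hd _ hbcE (Sym2.mk_isDiag_iff.mpr hh)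
        apply ih
        refine hpc.trans (finset_adj.mpr ⟨Finset.mem_erase.mpr ⟨?_, ?_⟩, hbne.symm⟩).reachable
        · rw [Sym2.eq_swap]; exact hbc'
        · rw [Sym2.eq_swap]; exact hbcE
  exact key p hqp (SimpleGraph.Reachable.refl p)

lemma no_good (hne : u ≠ v) (he : s(u, v) ∈ E) (heA : s(u, v) ∉ A) (hA : A ⊆ E)
    (hd : ∀ x ∈ E, ¬ x.IsDiag)
    (hnc : ¬ (SimpleGraph.fromEdgeSet ((E.erase (s(u, v))) : Set (Sym2 V))).Reachable u v)
    (D : sOri (E \ A)) (hg : Good E A D.1) : False := by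
  have hmem : s(u, v) ∈ E \ A := Finset.mem_sdiff.mpr ⟨he, heA⟩
  by_cases hD : D.1 u v
  · exact no_good_aux D hne he heA hd hA hnc hD hg
  · have hD' : D.1 v u := by
      have h1 := D.2.2 u v hmem
      by_contra h2
      exact hD (h1.mpr h2)
    have hswap : s(v, u) = s(u, v) := Sym2.eq_swap
    refine no_good_aux D hne.symm (by rwa [hswap]) (by rwa [hswap]) hd hA ?_ hD' hg
    rw [hswap]
    exact fun h => hnc h.symm

lemma bi_good_cases (D' : sOri (E \ insert (s(u, v)) A)) (hne : u ≠ v) (he : s(u, v) ∈ E)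
    (heA : s(u, v) ∉ A) (hA : A ⊆ E) (hd : ∀ x ∈ E, ¬ x.IsDiag)
    (hconn : (SimpleGraph.fromEdgeSet ((E.erase (s(u, v))) : Set (Sym2 V))).Reachable u v)
    (hbi : Good E (insert (s(u, v)) A) D'.1) :
    Good E A (ext D'.1 u v) ∨ Good E A (ext D'.1 v u) := by
  have main : ReflTransGen (arcs D'.1 A) u v ∨ ReflTransGen (arcs D'.1 A) v u := by
    by_contra hcon
    push_neg at hcon
    obtain ⟨h1, h2⟩ := hcon
    have hrtuv : ReflTransGen (SimpleGraph.fromEdgeSet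
        ((E.erase (s(u, v))) : Set (Sym2 V))).Adj u v :=
      (reachable_iff_reflTransGen u v).mp hconn
    obtain ⟨a, b, hab, ha, hb, hua⟩ :=
      exists_crossing (S := {x | ReflTransGen (arcs D'.1 A) u x}) hrtuv (ReflTransGen.refl) h1
    rw [finset_adj] at hab
    obtain ⟨habm, habne⟩ := hab
    rw [Finset.mem_erase] at habm
    have hnotA : s(a, b) ∉ A := fun hh => hb (ha.tail (Or.inr hh))
    have hmem' : s(a, b) ∈ E \ insert (s(u, v)) A := by
      rw [Finset.mem_sdiff, Finset.mem_insert]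
      exact ⟨habm.2, fun hh => hh.elim habm.1 hnotA⟩
    have hDba : D'.1 b a := by
      have hiff := D'.2.2 a b hmem'
      by_contra h3
      exact hb (ha.tail (Or.inl (hiff.mpr h3)))
    have hreach_ua : (SimpleGraph.fromEdgeSet
        ((E.erase (s(u, v))) : Set (Sym2 V))).Reachable u a :=
      (reachable_iff_reflTransGen u a).mpr hua
    have hreach_ub : (SimpleGraph.fromEdgeSet (E : Set (Sym2 V))).Reachable u b :=
      ((hreach_ua.trans (finset_adj.mpr ⟨Finset.mem_erase.mpr habm, habne⟩).reachable)).mono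
        erase_le_E
    have hvb : ReflTransGen (arcs D'.1 A) v b := by
      have h3 := ReflTransGen.mono (fun a b hab => (arcs_insert_iff D' hne a b).mp hab) _ _ (hbi u b hreach_ub)
      rcases rtT h3 with h4 | ⟨h4, h5⟩ | ⟨h4, h5⟩
      · exact absurd h4 hb
      · exact h5
      · exact absurd h4 h1
    have hva : ReflTransGen (arcs D'.1 A) v a := hvb.tail (Or.inl hDba)
    have hreach_au : (SimpleGraph.fromEdgeSet (E : Set (Sym2 V))).Reachable a u :=
      (hreach_ua.symm).mono erase_le_E
    have h3 := ReflTransGen.mono (fun a b hab => (arcs_insert_iff D' hne a b).mp hab) _ _ (hbi a u hreach_au)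
    rcases rtT h3 with h4 | ⟨h4, h5⟩ | ⟨h4, h5⟩
    · exact h2 (hva.trans h4)
    · exact h2 h5
    · exact h1 (ha.trans h4)
  rcases main with hm | hm
  · right
    intro x y hxy
    refine rt_bind (fun a b hab => ?_)
      (ReflTransGen.mono (fun a b hab => (arcs_insert_iff D' hne a b).mp hab) _ _ (hbi x y hxy))
    rcases hab with h | ⟨rfl, rfl⟩ | ⟨rfl, rfl⟩
    · exact ReflTransGen.single (by unfold arcs ext at *; tauto)
    · exact ReflTransGen.mono (fun a b hab => by unfold arcs ext at *; tauto) _ _ hm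
    · exact ReflTransGen.single (Or.inl (Or.inr ⟨rfl, rfl⟩))
  · left
    intro x y hxy
    refine rt_bind (fun a b hab => ?_)
      (ReflTransGen.mono (fun a b hab => (arcs_insert_iff D' hne a b).mp hab) _ _ (hbi x y hxy))
    rcases hab with h | ⟨rfl, rfl⟩ | ⟨rfl, rfl⟩
    · exact ReflTransGen.single (by unfold arcs ext at *; tauto)
    · exact ReflTransGen.single (Or.inl (Or.inr ⟨rfl, rfl⟩))
    · exact ReflTransGen.mono (fun a b hab => by unfold arcs ext at *; tauto) _ _ hm

lemma both_good_erase (D' : sOri (E \ insert (s(u, v)) A)) (hne : u ≠ v) (he : s(u, v) ∈ E)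
    (g1 : Good E A (ext D'.1 u v)) (g2 : Good E A (ext D'.1 v u)) :
    Good (E.erase (s(u, v))) A D'.1 := by
  have hadjuv : (SimpleGraph.fromEdgeSet (E : Set (Sym2 V))).Reachable u v :=
    (finset_adj.mpr ⟨he, hne⟩).reachable
  have r1 : ReflTransGen (arcs D'.1 A) u v := by
    have h2 : ReflTransGen (fun a b => arcs D'.1 A a b ∨ (a = v ∧ b = u)) u v :=
      ReflTransGen.mono (fun a b hab => by unfold arcs ext at *; tauto) _ _ (g2 u v hadjuv)
    rcases rt_drop_pair h2 with h3 | ⟨h3, h4⟩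
    · exact h3
    · exact h3
  intro x y hxy
  have hE := hxy.mono (erase_le_E (u := u) (v := v))
  have h2 : ReflTransGen (fun a b => arcs D'.1 A a b ∨ (a = u ∧ b = v)) x y :=
    ReflTransGen.mono (fun a b hab => by unfold arcs ext at *; tauto) _ _ (g1 x y hE)
  refine rt_bind (fun a b hab => ?_) h2
  rcases hab with h | ⟨rfl, rfl⟩
  · exact ReflTransGen.single h
  · exact r1

lemma restr_ext (D' : sOri (E \ insert (s(u, v)) A)) {p q : V} (hpq : s(p, q) = s(u, v)) :
    restr (ext D'.1 p q) (s(u, v)) = D'.1 := by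
  funext a b
  unfold restr ext
  refine propext ⟨?_, ?_⟩
  · rintro ⟨h | ⟨h1, h2⟩, hne2⟩
    · exact h
    · exact absurd (by rw [h1, h2]; exact hpq) hne2
  · intro h
    exact ⟨Or.inl h, fun hh => D'_not_on_e D' hh h⟩

lemma ext_restr (D : sOri (E \ A)) {p q : V} (hD : D.1 p q) (hpq : s(p, q) = s(u, v))
    (he : s(u, v) ∈ E) (heA : s(u, v) ∉ A) :
    ext (restr D.1 (s(u, v))) p q = D.1 := by
  funext a b
  unfold restr ext
  refine propext ⟨?_, ?_⟩
  · rintro (⟨h, -⟩ | ⟨h1, h2⟩)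
    · exact h
    · rw [h1, h2]; exact hD
  · intro h
    by_cases hh : s(a, b) = s(u, v)
    · rcases Sym2.eq_iff.mp (hh.trans hpq.symm) with ⟨h1, h2⟩ | ⟨h1, h2⟩
      · exact Or.inr ⟨h1, h2⟩
      · exfalso
        have hmem : s(p, q) ∈ E \ A := by rw [hpq]; exact Finset.mem_sdiff.mpr ⟨he, heA⟩
        have hno := (D.2.2 p q hmem).mp hD
        rw [h1, h2] at h
        exact hno h
    · exact Or.inl ⟨h, hh⟩

lemma dir_total (D : sOri (E \ A)) (hmem : s(u, v) ∈ E \ A) : D.1 u v ∨ D.1 v u := by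
  have h := D.2.2 u v hmem
  tauto

open Classical in
noncomputable def splitFun (E A : Finset (Sym2 V)) (u v : V) :
    {D : sOri (E \ A) // Good E A D.1} →
      {D : sOri (E \ insert (s(u, v)) A) // Good (E.erase (s(u, v))) A D.1} ⊕
      {D : sOri (E \ insert (s(u, v)) A) // Good E (insert (s(u, v)) A) D.1} := fun DD =>
  if hE : Good (E.erase (s(u, v))) A (restrO (u := u) (v := v) DD.1).1 then
    if DD.1.1 u v then Sum.inl ⟨restrO DD.1, hE⟩
    else Sum.inr ⟨restrO DD.1, erase_good_to_bi _ hE⟩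
  else Sum.inr ⟨restrO DD.1, good_to_bi DD.1 DD.2⟩

open Classical in
noncomputable def joinFun (hne : u ≠ v) (he : s(u, v) ∈ E) (heA : s(u, v) ∉ A) (hA : A ⊆ E)
    (hd : ∀ x ∈ E, ¬ x.IsDiag)
    (hconn : (SimpleGraph.fromEdgeSet ((E.erase (s(u, v))) : Set (Sym2 V))).Reachable u v) :
    ({D : sOri (E \ insert (s(u, v)) A) // Good (E.erase (s(u, v))) A D.1} ⊕
      {D : sOri (E \ insert (s(u, v)) A) // Good E (insert (s(u, v)) A) D.1}) →
      {D : sOri (E \ A) // Good E A D.1} :=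
  Sum.elim
    (fun D' => ⟨extO D'.1 u v rfl hne he heA, good_erase_ext D'.1 he hconn u v D'.2⟩)
    (fun D' =>
      if h1 : Good (E.erase (s(u, v))) A D'.1.1 then
        ⟨extO D'.1 v u Sym2.eq_swap hne.symm he heA, good_erase_ext D'.1 he hconn v u h1⟩
      else if h2 : Good E A (ext D'.1.1 u v) then
        ⟨extO D'.1 u v rfl hne he heA, h2⟩
      else
        ⟨extO D'.1 v u Sym2.eq_swap hne.symm he heA,
          (bi_good_cases D'.1 hne he heA hA hd hconn D'.2).resolve_left h2⟩)

lemma join_split (hne : u ≠ v) (he : s(u, v) ∈ E) (heA : s(u, v) ∉ A) (hA : A ⊆ E)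
    (hd : ∀ x ∈ E, ¬ x.IsDiag)
    (hconn : (SimpleGraph.fromEdgeSet ((E.erase (s(u, v))) : Set (Sym2 V))).Reachable u v)
    (x : {D : sOri (E \ A) // Good E A D.1}) :
    joinFun hne he heA hA hd hconn (splitFun E A u v x) = x := by
  obtain ⟨D, hg⟩ := x
  unfold splitFun
  by_cases hE : Good (E.erase (s(u, v))) A (restrO (u := u) (v := v) D).1
  · rw [dif_pos hE]
    by_cases huv : D.1 u v
    · rw [if_pos huv]
      unfold joinFun
      rw [Sum.elim_inl]
      exact Subtype.ext (Subtype.ext (ext_restr D huv rfl he heA))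
    · rw [if_neg huv]
      unfold joinFun
      rw [Sum.elim_inr, dif_pos hE]
      have hvu : D.1 v u := (dir_total D (Finset.mem_sdiff.mpr ⟨he, heA⟩)).resolve_left huv
      exact Subtype.ext (Subtype.ext (ext_restr D hvu Sym2.eq_swap he heA))
  · rw [dif_neg hE]
    unfold joinFun
    rw [Sum.elim_inr, dif_neg hE]
    by_cases huv : D.1 u v
    · have hx : ext (restrO (u := u) (v := v) D).1 u v = D.1 :=
        ext_restr D huv rfl he heA
      have h2 : Good E A (ext (restrO (u := u) (v := v) D).1 u v) := by
        rw [hx]; exact hg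
      rw [dif_pos h2]
      exact Subtype.ext (Subtype.ext hx)
    · have hvu : D.1 v u := (dir_total D (Finset.mem_sdiff.mpr ⟨he, heA⟩)).resolve_left huv
      have hx : ext (restrO (u := u) (v := v) D).1 v u = D.1 :=
        ext_restr D hvu Sym2.eq_swap he heA
      have h2 : ¬ Good E A (ext (restrO (u := u) (v := v) D).1 u v) := by
        intro hcon
        exact hE (both_good_erase (restrO D) hne he hcon (by rw [hx]; exact hg))
      rw [dif_neg h2]
      exact Subtype.ext (Subtype.ext hx)

lemma split_join (hne : u ≠ v) (he : s(u, v) ∈ E) (heA : s(u, v) ∉ A) (hA : A ⊆ E)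
    (hd : ∀ x ∈ E, ¬ x.IsDiag)
    (hconn : (SimpleGraph.fromEdgeSet ((E.erase (s(u, v))) : Set (Sym2 V))).Reachable u v)
    (s : {D : sOri (E \ insert (s(u, v)) A) // Good (E.erase (s(u, v))) A D.1} ⊕
      {D : sOri (E \ insert (s(u, v)) A) // Good E (insert (s(u, v)) A) D.1}) :
    splitFun E A u v (joinFun hne he heA hA hd hconn s) = s := by
  rcases s with ⟨D', h'⟩ | ⟨D', h'⟩
  · unfold joinFun
    rw [Sum.elim_inl]
    unfold splitFun
    have hre : restr (ext D'.1 u v) (s(u, v)) = D'.1 := restr_ext D' rfl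
    have hE : Good (E.erase (s(u, v))) A
        (restrO (u := u) (v := v) (extO D' u v rfl hne he heA)).1 := by
      show Good _ _ (restr (ext D'.1 u v) (s(u, v)))
      rw [hre]; exact h'
    rw [dif_pos hE]
    have huv : (extO D' u v rfl hne he heA).1 u v := Or.inr ⟨rfl, rfl⟩
    rw [if_pos huv]
    exact congrArg Sum.inl (Subtype.ext (Subtype.ext hre))
  · unfold joinFun
    rw [Sum.elim_inr]
    by_cases h1 : Good (E.erase (s(u, v))) A D'.1
    · rw [dif_pos h1]
      unfold splitFun
      have hre : restr (ext D'.1 v u) (s(u, v)) = D'.1 := restr_ext D' Sym2.eq_swap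
      have hE : Good (E.erase (s(u, v))) A
          (restrO (u := u) (v := v) (extO D' v u Sym2.eq_swap hne.symm he heA)).1 := by
        show Good _ _ (restr (ext D'.1 v u) (s(u, v)))
        rw [hre]; exact h1
      rw [dif_pos hE]
      have hnuv : ¬ (extO D' v u Sym2.eq_swap hne.symm he heA).1 u v := by
        rintro (h | ⟨h3, h4⟩)
        · exact D'_not_on_e D' rfl h
        · exact hne h3
      rw [if_neg hnuv]
      exact congrArg Sum.inr (Subtype.ext (Subtype.ext hre))
    · rw [dif_neg h1]
      by_cases h2 : Good E A (ext D'.1 u v)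
      · rw [dif_pos h2]
        unfold splitFun
        have hre : restr (ext D'.1 u v) (s(u, v)) = D'.1 := restr_ext D' rfl
        have hE : ¬ Good (E.erase (s(u, v))) A
            (restrO (u := u) (v := v) (extO D' u v rfl hne he heA)).1 := by
          show ¬ Good _ _ (restr (ext D'.1 u v) (s(u, v)))
          rw [hre]; exact h1
        rw [dif_neg hE]
        exact congrArg Sum.inr (Subtype.ext (Subtype.ext hre))
      · rw [dif_neg h2]
        unfold splitFun
        have hre : restr (ext D'.1 v u) (s(u, v)) = D'.1 := restr_ext D' Sym2.eq_swap
        have hE : ¬ Good (E.erase (s(u, v))) A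
            (restrO (u := u) (v := v) (extO D' v u Sym2.eq_swap hne.symm he heA)).1 := by
          show ¬ Good _ _ (restr (ext D'.1 v u) (s(u, v)))
          rw [hre]; exact h1
        rw [dif_neg hE]
        exact congrArg Sum.inr (Subtype.ext (Subtype.ext hre))

lemma NN_split (hne : u ≠ v) (he : s(u, v) ∈ E) (heA : s(u, v) ∉ A) (hA : A ⊆ E)
    (hd : ∀ x ∈ E, ¬ x.IsDiag)
    (hconn : (SimpleGraph.fromEdgeSet ((E.erase (s(u, v))) : Set (Sym2 V))).Reachable u v) :
    NN E A = NN (E.erase (s(u, v))) A + NN E (insert (s(u, v)) A) := by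
  classical
  have hfin : (E.erase (s(u, v))) \ A = E \ insert (s(u, v)) A := by
    ext x
    simp only [Finset.mem_sdiff, Finset.mem_erase, Finset.mem_insert]
    tauto
  rw [NN, NN, NN, hfin, ← Nat.card_sum]
  exact Nat.card_congr ⟨splitFun E A u v, joinFun hne he heA hA hd hconn,
    join_split hne he heA hA hd hconn, split_join hne he heA hA hd hconn⟩

lemma NN_zero_bridge (hne : u ≠ v) (he : s(u, v) ∈ E) (heA : s(u, v) ∉ A) (hA : A ⊆ E)
    (hd : ∀ x ∈ E, ¬ x.IsDiag)
    (hnc : ¬ (SimpleGraph.fromEdgeSet ((E.erase (s(u, v))) : Set (Sym2 V))).Reachable u v) :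
    NN E A = 0 := by
  have : IsEmpty {D : sOri (E \ A) // Good E A D.1} :=
    ⟨fun DD => (no_good hne he heA hA hd hnc DD.1 DD.2).elim⟩
  rw [NN]
  exact Nat.card_of_isEmpty

lemma NN_bridge_eq (hne : u ≠ v) (he : s(u, v) ∈ E) (heA : s(u, v) ∉ A) (hA : A ⊆ E)
    (hd : ∀ x ∈ E, ¬ x.IsDiag)
    (hnc : ¬ (SimpleGraph.fromEdgeSet ((E.erase (s(u, v))) : Set (Sym2 V))).Reachable u v) :
    NN (E.erase (s(u, v))) A = NN E (insert (s(u, v)) A) := by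
  have hfin : (E.erase (s(u, v))) \ A = E \ insert (s(u, v)) A := by
    ext x
    simp only [Finset.mem_sdiff, Finset.mem_erase, Finset.mem_insert]
    tauto
  rw [NN, NN, hfin]
  apply Nat.card_congr
  apply Equiv.subtypeEquivRight
  intro D'
  exact ⟨fun h => erase_good_to_bi D' h, fun h => bi_good_to_erase D' hne hA heA hd hnc h⟩

lemma adjE_reach_erase (he : s(u, v) ∈ E)
    (hconn : (SimpleGraph.fromEdgeSet ((E.erase (s(u, v))) : Set (Sym2 V))).Reachable u v)
    {a b : V} (hab : (SimpleGraph.fromEdgeSet (E : Set (Sym2 V))).Adj a b) :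
    (SimpleGraph.fromEdgeSet ((E.erase (s(u, v))) : Set (Sym2 V))).Reachable a b := by
  rw [finset_adj] at hab
  by_cases hh : s(a, b) = s(u, v)
  · rcases Sym2.eq_iff.mp hh with ⟨h1, h2⟩ | ⟨h1, h2⟩
    · rw [h1, h2]; exact hconn
    · rw [h1, h2]; exact hconn.symm
  · exact (finset_adj.mpr ⟨Finset.mem_erase.mpr ⟨hh, hab.1⟩, hab.2⟩).reachable

lemma ff_rec (he' : s(u, v) ∈ E \ A) :
    ff E A = ff (E.erase (s(u, v))) A + ff E (insert (s(u, v)) A) := by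
  classical
  have h1 : E \ A = insert (s(u, v)) ((E \ A).erase (s(u, v))) := (Finset.insert_erase he').symm
  have h2 : (E.erase (s(u, v))) \ A = (E \ A).erase (s(u, v)) := by
    ext x
    simp only [Finset.mem_sdiff, Finset.mem_erase]
    tauto
  have h3 : E \ insert (s(u, v)) A = (E \ A).erase (s(u, v)) := by
    ext x
    simp only [Finset.mem_sdiff, Finset.mem_erase, Finset.mem_insert]
    tauto
  rw [ff, h1, Finset.sum_powerset_insert (Finset.notMem_erase _ _)]
  rw [ff, h2, ff, h3]
  congr 1
  apply Finset.sum_congr rfl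
  intro F _
  have h4 : insert (s(u, v)) F ∪ A = F ∪ insert (s(u, v)) A := by
    ext x
    simp only [Finset.mem_union, Finset.mem_insert]
    tauto
  rw [h4]

lemma main_base (A : Finset (Sym2 V)) :
    ff A A = (-1 : ℚ) ^ cc (SimpleGraph.fromEdgeSet (A : Set (Sym2 V))) * (NN A A : ℚ) := by
  have h0 : A \ A = ∅ := Finset.sdiff_self A
  rw [ff, NN, h0, Finset.powerset_empty, Finset.sum_singleton, Finset.empty_union]
  have hcard : Nat.card {D : sOri (∅ : Finset (Sym2 V)) // Good A A D.1} = 1 := by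
    rw [Nat.card_eq_one_iff_unique]
    constructor
    · constructor
      rintro ⟨⟨D1, hs1, ho1⟩, hg1⟩ ⟨⟨D2, hs2, ho2⟩, hg2⟩
      refine Subtype.ext (Subtype.ext ?_)
      funext a b
      exact propext ⟨fun h => absurd (hs1 a b h) (Finset.notMem_empty _),
        fun h => absurd (hs2 a b h) (Finset.notMem_empty _)⟩
    · refine ⟨⟨⟨fun _ _ => False, fun a b h => h.elim,
        fun a b h => absurd h (Finset.notMem_empty _)⟩, ?_⟩⟩
      intro x y hxy
      rw [reachable_iff_reflTransGen] at hxy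
      refine rt_bind (fun a b hab => ?_) hxy
      rw [finset_adj] at hab
      exact ReflTransGen.single (Or.inr hab.1)
  rw [hcard]
  norm_num

lemma main_ind (n : ℕ) : ∀ E A : Finset (Sym2 V), A ⊆ E → (∀ x ∈ E, ¬ x.IsDiag) →
    (E \ A).card = n →
    ff E A = (-1 : ℚ) ^ cc (SimpleGraph.fromEdgeSet (E : Set (Sym2 V))) * (NN E A : ℚ) := by
  induction n with
  | zero =>
    intro E A hA _ hcard
    have hEA : E = A :=
      Finset.Subset.antisymm (Finset.sdiff_eq_empty_iff_subset.mp (Finset.card_eq_zero.mp hcard)) hA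
    subst hEA
    exact main_base E
  | succ n ih =>
    intro E A hA hd hcard
    have hne0 : (E \ A).Nonempty := Finset.card_pos.mp (by rw [hcard]; exact Nat.succ_pos n)
    obtain ⟨e, he'⟩ := hne0
    obtain ⟨u, v, rfl⟩ : ∃ u v : V, e = s(u, v) := Sym2.ind (fun x y => ⟨x, y, rfl⟩) e
    have heSD := he'
    rw [Finset.mem_sdiff] at he'
    obtain ⟨he, heA⟩ := he'
    have hne : u ≠ v := fun hh => hd _ he (Sym2.mk_isDiag_iff.mpr hh)
    have h2 : (E.erase (s(u, v))) \ A = (E \ A).erase (s(u, v)) := by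
      ext x
      simp only [Finset.mem_sdiff, Finset.mem_erase]
      tauto
    have h3 : E \ insert (s(u, v)) A = (E \ A).erase (s(u, v)) := by
      ext x
      simp only [Finset.mem_sdiff, Finset.mem_erase, Finset.mem_insert]
      tauto
    have hA1 : A ⊆ E.erase (s(u, v)) := fun x hx =>
      Finset.mem_erase.mpr ⟨fun hh => heA (hh ▸ hx), hA hx⟩
    have hd1 : ∀ x ∈ E.erase (s(u, v)), ¬ x.IsDiag := fun x hx =>
      hd x (Finset.mem_erase.mp hx).2
    have hc1 : ((E.erase (s(u, v))) \ A).card = n := by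
      rw [h2, Finset.card_erase_of_mem heSD, hcard]; omega
    have hA2 : insert (s(u, v)) A ⊆ E := Finset.insert_subset he hA
    have hc2 : (E \ insert (s(u, v)) A).card = n := by
      rw [h3, Finset.card_erase_of_mem heSD, hcard]; omega
    have IH1 := ih (E.erase (s(u, v))) A hA1 hd1 hc1
    have IH2 := ih E (insert (s(u, v)) A) hA2 hd hc2
    rw [ff_rec heSD, IH1, IH2]
    by_cases hconn : (SimpleGraph.fromEdgeSet ((E.erase (s(u, v))) : Set (Sym2 V))).Reachable u v
    · have hcc : cc (SimpleGraph.fromEdgeSet ((E.erase (s(u, v))) : Set (Sym2 V))) =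
          cc (SimpleGraph.fromEdgeSet (E : Set (Sym2 V))) :=
        cc_eq_of_le erase_le_E (fun a b hab => adjE_reach_erase he hconn hab)
      rw [hcc, NN_split hne he heA hA hd hconn]
      push_cast
      ring
    · have hcc : cc (SimpleGraph.fromEdgeSet ((E.erase (s(u, v))) : Set (Sym2 V))) =
          cc (SimpleGraph.fromEdgeSet (E : Set (Sym2 V))) + 1 := by
        refine cc_bridge erase_le_E (finset_adj.mpr ⟨he, hne⟩) ?_ hconn
        intro a b hab
        rw [finset_adj] at hab
        by_cases hh : s(a, b) = s(u, v)
        · rcases Sym2.eq_iff.mp hh with ⟨h5, h6⟩ | ⟨h5, h6⟩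
          · exact Or.inr (Or.inl ⟨h5, h6⟩)
          · exact Or.inr (Or.inr ⟨h5, h6⟩)
        · exact Or.inl (finset_adj.mpr ⟨Finset.mem_erase.mpr ⟨hh, hab.1⟩, hab.2⟩)
      rw [hcc, NN_zero_bridge hne he heA hA hd hconn, NN_bridge_eq hne he heA hA hd hconn]
      push_cast
      rw [pow_succ]
      ring

end Core

end TutteAux

lemma neg_one_sub_pow {a b : ℕ} (h : b ≤ a) : (-1 : ℚ) ^ (a - b) = (-1) ^ a * (-1) ^ b := by
  have h2 : (-1 : ℚ) ^ (a - b) * (-1) ^ b = (-1) ^ a := by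
    rw [← pow_add, Nat.sub_add_cancel h]
  calc (-1 : ℚ) ^ (a - b) = (-1) ^ (a - b) * ((-1) ^ b * (-1) ^ b) := by
        rw [← mul_pow]; norm_num
    _ = ((-1) ^ (a - b) * (-1) ^ b) * (-1) ^ b := by ring
    _ = (-1) ^ a * (-1) ^ b := by rw [h2]

lemma GOext {V : Type} {G : SimpleGraph V} {O O' : GraphOrientation G}
    (h : O.rel = O'.rel) : O = O' := by
  cases O; cases O'
  dsimp at h
  subst h
  rfl

/-- T_G(0,2) counts the orientations of G in which every connected component is
strongly connected; equivalently Σ_F (-1)^(cc(G|F)) = (-1)^(cc G) times this count. -/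
theorem Tutte_zero_two_strongly_connected_orientations {V : Type} [Fintype V] [DecidableEq V]
    (G : SimpleGraph V) [DecidableRel G.Adj] :
    TG G 0 2 =
      Nat.card {O : GraphOrientation G //
        ∀ x y : V, G.Reachable x y → Relation.ReflTransGen O.rel x y} ∧
    (∑ F ∈ G.edgeFinset.powerset,
        (-1 : ℚ) ^ cc (SimpleGraph.fromEdgeSet (F : Set (Sym2 V)))) =
      (-1 : ℚ) ^ cc G *
      Nat.card {O : GraphOrientation G //
        ∀ x y : V, G.Reachable x y → Relation.ReflTransGen O.rel x y} := by
  classical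
  have hG : SimpleGraph.fromEdgeSet ((G.edgeFinset : Finset (Sym2 V)) : Set (Sym2 V)) = G := by
    rw [SimpleGraph.coe_edgeFinset, SimpleGraph.fromEdgeSet_edgeSet]
  have hd : ∀ x ∈ G.edgeFinset, ¬ x.IsDiag := fun x hx =>
    G.not_isDiag_of_mem_edgeSet (SimpleGraph.mem_edgeFinset.mp hx)
  have hmain := TutteAux.main_ind (G.edgeFinset \ ∅).card G.edgeFinset ∅
    (Finset.empty_subset _) hd rfl
  have hcc : cc (SimpleGraph.fromEdgeSet ((G.edgeFinset : Finset (Sym2 V)) : Set (Sym2 V))) =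
      cc G := by rw [hG]
  have hNN : TutteAux.NN G.edgeFinset ∅ = Nat.card {O : GraphOrientation G //
      ∀ x y : V, G.Reachable x y → Relation.ReflTransGen O.rel x y} := by
    rw [TutteAux.NN]
    apply Nat.card_congr
    refine ⟨fun DD => ⟨⟨DD.1.1, ?_, ?_⟩, ?_⟩, fun OO => ⟨⟨OO.1.rel, ?_, ?_⟩, ?_⟩, ?_, ?_⟩
    · intro a b h
      have h1 := DD.1.2.1 a b h
      rw [Finset.sdiff_empty, SimpleGraph.mem_edgeFinset] at h1
      exact (SimpleGraph.mem_edgeSet G).mp h1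
    · intro a b hadj
      refine DD.1.2.2 a b ?_
      rw [Finset.sdiff_empty, SimpleGraph.mem_edgeFinset]
      exact (SimpleGraph.mem_edgeSet G).mpr hadj
    · intro x y hxy
      have h5 := DD.2 x y (by rw [hG]; exact hxy)
      exact Relation.ReflTransGen.mono (fun a b (hab : TutteAux.arcs DD.1.1 ∅ a b) => hab.resolve_right (Finset.notMem_empty _)) _ _ h5
    · intro a b h
      rw [Finset.sdiff_empty, SimpleGraph.mem_edgeFinset]
      exact (SimpleGraph.mem_edgeSet G).mpr (OO.1.sub a b h)
    · intro a b hmem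
      rw [Finset.sdiff_empty, SimpleGraph.mem_edgeFinset] at hmem
      exact OO.1.exactlyOne a b ((SimpleGraph.mem_edgeSet G).mp hmem)
    · intro x y hxy
      rw [hG] at hxy
      exact Relation.ReflTransGen.mono (fun a b hab => Or.inl hab) _ _ (OO.2 x y hxy)
    · intro DD
      exact Subtype.ext (Subtype.ext rfl)
    · intro OO
      exact Subtype.ext (GOext rfl)
  have hff : TutteAux.ff G.edgeFinset ∅ =
      ∑ F ∈ G.edgeFinset.powerset,
        (-1 : ℚ) ^ cc (SimpleGraph.fromEdgeSet (F : Set (Sym2 V))) := by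
    rw [TutteAux.ff, Finset.sdiff_empty]
    apply Finset.sum_congr rfl
    intro F _
    rw [Finset.union_empty]
  have key2 : (∑ F ∈ G.edgeFinset.powerset,
      (-1 : ℚ) ^ cc (SimpleGraph.fromEdgeSet (F : Set (Sym2 V)))) =
      (-1 : ℚ) ^ cc G * Nat.card {O : GraphOrientation G //
        ∀ x y : V, G.Reachable x y → Relation.ReflTransGen O.rel x y} := by
    rw [← hff, hmain, hcc, hNN]
  refine ⟨?_, key2⟩
  have hsq : ((-1 : ℚ) ^ cc G) * ((-1 : ℚ) ^ cc G) = 1 := by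
    rw [← mul_pow]; norm_num
  have hTG : TG G 0 2 = (-1 : ℚ) ^ cc G * ∑ F ∈ G.edgeFinset.powerset,
      (-1 : ℚ) ^ cc (SimpleGraph.fromEdgeSet (F : Set (Sym2 V))) := by
    rw [TG, Finset.mul_sum]
    apply Finset.sum_congr rfl
    intro F hF
    have hle : cc G ≤ cc (SimpleGraph.fromEdgeSet (F : Set (Sym2 V))) := by
      have h5 : SimpleGraph.fromEdgeSet (F : Set (Sym2 V)) ≤ G := by
        rw [← hG]
        exact SimpleGraph.fromEdgeSet_mono
          (Finset.coe_subset.mpr (Finset.mem_powerset.mp hF))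
      exact TutteAux.cc_le_of_le h5
    rw [show (0 : ℚ) - 1 = -1 by norm_num, show (2 : ℚ) - 1 = 1 by norm_num, one_pow, mul_one]
    rw [neg_one_sub_pow hle]
    ring
  rw [hTG, key2, ← mul_assoc, hsq, one_mul]
end

section
/- Let G be a finite simple graph and H an orientation of G. Define a map υ sending a pair (H, I), where I is an ideal of H (i.e. x ∈ I and (x,y) ∈ A(H) implies y ∈ I), to the triple (I, H restricted to V(G)\I, H restricted to I). Then υ is a bijection from the set of pairs (H, I) with H an orientation of G and I an ideal of H, onto the set of triples (J, H', H'') where J ⊆ V(G), H' is an orientation of the induced subgraph G[V(G)\J], and H'' is an orientation of the induced subgraph G[J]. -/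
/-- `I` is an ideal of the oriented graph `O`: arcs starting in `I` end in `I`. -/
def IsIdealO {V : Type} {G : SimpleGraph V} (O : GraphOrientation G) (I : Set V) : Prop :=
  ∀ x y : V, x ∈ I → O.rel x y → y ∈ I

/-- Restriction of an orientation to the induced subgraph on a set of vertices. -/
def GraphOrientation.restrict {V : Type} {G : SimpleGraph V} (O : GraphOrientation G)
    (s : Set V) : GraphOrientation (G.induce s) where
  rel a b := O.rel a b
  sub a b h := O.sub a b h
  exactlyOne a b h := O.exactlyOne a b h

lemma GraphOrientation.ext' {V : Type} {G : SimpleGraph V} {O₁ O₂ : GraphOrientation G}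
    (h : ∀ v w, O₁.rel v w ↔ O₂.rel v w) : O₁ = O₂ := by
  cases O₁; cases O₂
  simp only [GraphOrientation.mk.injEq]
  funext v w
  exact propext (h v w)

/-- The map υ : (H, I) ↦ (I, H|_{V∖I}, H|_I) is a bijection from pairs of an
orientation of G with an ideal, onto triples of a vertex subset J, an orientation of
the induced subgraph on V∖J and an orientation of the induced subgraph on J. -/
theorem orientation_ideal_bijection {V : Type} [Fintype V] (G : SimpleGraph V) :
    Function.Bijective
      (fun p : {q : GraphOrientation G × Set V // IsIdealO q.1 q.2} =>
        (⟨p.1.2, p.1.1.restrict (p.1.2ᶜ), p.1.1.restrict p.1.2⟩ :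
          Σ J : Set V, GraphOrientation (G.induce (Jᶜ)) × GraphOrientation (G.induce J))) := by
  constructor
  · rintro ⟨⟨O₁, I₁⟩, h₁⟩ ⟨⟨O₂, I₂⟩, h₂⟩ heq
    simp only at heq
    have hI : I₁ = I₂ := congrArg Sigma.fst heq
    subst hI
    have hrest : (O₁.restrict I₁ᶜ, O₁.restrict I₁) = (O₂.restrict I₁ᶜ, O₂.restrict I₁) :=
      eq_of_heq (Sigma.ext_iff.mp heq).2
    have hc := congrArg Prod.fst hrest
    have hi := congrArg Prod.snd hrest
    simp only at hc hi
    have : O₁ = O₂ := by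
      apply GraphOrientation.ext'
      intro v w
      by_cases hadj : G.Adj v w
      · by_cases hv : v ∈ I₁ <;> by_cases hw : w ∈ I₁
        · have := congrArg GraphOrientation.rel hi
          exact iff_of_eq (congrFun (congrFun this ⟨v, hv⟩) ⟨w, hw⟩)
        · constructor
          · intro h; exact absurd (h₁ v w hv h) hw
          · intro h; exact absurd (h₂ v w hv h) hw
        · have n₁ : ¬ O₁.rel w v := fun h => hv (h₁ w v hw h)
          have n₂ : ¬ O₂.rel w v := fun h => hv (h₂ w v hw h)
          constructor
          · intro _
            exact (O₂.exactlyOne v w hadj).mpr n₂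
          · intro _
            exact (O₁.exactlyOne v w hadj).mpr n₁
        · have := congrArg GraphOrientation.rel hc
          exact iff_of_eq (congrFun (congrFun this ⟨v, hv⟩) ⟨w, hw⟩)
      · constructor
        · intro h; exact absurd (O₁.sub v w h) hadj
        · intro h; exact absurd (O₂.sub v w h) hadj
    exact Subtype.ext (Prod.ext this rfl)
  · rintro ⟨J, H', H''⟩
    set O : GraphOrientation G :=
      { rel := fun x y =>
          (∃ hx : x ∈ J, ∃ hy : y ∈ J, H''.rel ⟨x, hx⟩ ⟨y, hy⟩) ∨
          (∃ hx : x ∉ J, ∃ hy : y ∉ J, H'.rel ⟨x, hx⟩ ⟨y, hy⟩) ∨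
          (x ∉ J ∧ y ∈ J ∧ G.Adj x y)
        sub := by
          rintro v w (⟨hv, hw, h⟩ | ⟨hv, hw, h⟩ | ⟨hv, hw, h⟩)
          · exact H''.sub _ _ h
          · exact H'.sub _ _ h
          · exact h
        exactlyOne := by
          intro v w hadj
          by_cases hv : v ∈ J <;> by_cases hw : w ∈ J
          · constructor
            · rintro (⟨hv', hw', h⟩ | ⟨hv', _⟩ | ⟨hv', _⟩)
              · rintro (⟨hw2, hv2, h2⟩ | ⟨hw2, _⟩ | ⟨hw2, _⟩)
                · exact ((H''.exactlyOne ⟨v, hv'⟩ ⟨w, hw'⟩ hadj).mp h) h2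
                · exact hw2 hw
                · exact hw2 hw
              · exact absurd hv hv'
              · exact absurd hv hv'
            · intro h
              refine Or.inl ⟨hv, hw, ?_⟩
              refine (H''.exactlyOne ⟨v, hv⟩ ⟨w, hw⟩ hadj).mpr fun h2 => ?_
              exact h (Or.inl ⟨hw, hv, h2⟩)
          · -- v ∈ J, w ∉ J : rel v w false, rel w v true
            constructor
            · rintro (⟨_, hw2, _⟩ | ⟨hv2, _⟩ | ⟨hv2, _⟩)
              · exact absurd hw2 hw
              · exact absurd hv hv2
              · exact absurd hv hv2
            · intro hn
              exact absurd (Or.inr (Or.inr ⟨hw, hv, hadj.symm⟩)) hn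
          · -- v ∉ J, w ∈ J : rel v w true, rel w v false
            constructor
            · intro _
              rintro (⟨hw2, hv2, _⟩ | ⟨hw2, _, _⟩ | ⟨hw2, _, _⟩)
              · exact hv hv2
              · exact hw2 hw
              · exact hw2 hw
            · intro _
              exact Or.inr (Or.inr ⟨hv, hw, hadj⟩)
          · constructor
            · rintro (⟨hv', _⟩ | ⟨hv', hw', h⟩ | ⟨_, hw2, _⟩)
              · exact absurd hv' hv
              · rintro (⟨hw2, _⟩ | ⟨hw2, hv2, h2⟩ | ⟨_, hv2, _⟩)
                · exact hw hw2
                · exact ((H'.exactlyOne ⟨v, hv'⟩ ⟨w, hw'⟩ hadj).mp h) h2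
                · exact hv hv2
              · exact absurd hw2 hw
            · intro h
              refine Or.inr (Or.inl ⟨hv, hw, ?_⟩)
              refine (H'.exactlyOne ⟨v, hv⟩ ⟨w, hw⟩ hadj).mpr fun h2 => ?_
              exact h (Or.inr (Or.inl ⟨hw, hv, h2⟩)) }
    have hIdeal : IsIdealO O J := by
      rintro x y hx (⟨_, hy, _⟩ | ⟨hx', _⟩ | ⟨hx', _⟩)
      · exact hy
      · exact absurd hx hx'
      · exact absurd hx hx'
    refine ⟨⟨⟨O, J⟩, hIdeal⟩, ?_⟩
    have e1 : O.restrict Jᶜ = H' := by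
      apply GraphOrientation.ext'
      rintro ⟨v, hv⟩ ⟨w, hw⟩
      constructor
      · rintro (⟨hv2, _⟩ | ⟨hv2, hw2, h⟩ | ⟨_, hw2, _⟩)
        · exact absurd hv2 hv
        · exact h
        · exact absurd hw2 hw
      · intro h
        exact Or.inr (Or.inl ⟨hv, hw, h⟩)
    have e2 : O.restrict J = H'' := by
      apply GraphOrientation.ext'
      rintro ⟨v, hv⟩ ⟨w, hw⟩
      constructor
      · rintro (⟨hv2, hw2, h⟩ | ⟨hv2, _⟩ | ⟨hv2, _⟩)
        · exact h
        · exact absurd hv hv2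
        · exact absurd hv hv2
      · intro h
        exact Or.inl ⟨hv, hw, h⟩
    simp only [e1, e2]
end

section
/- Let G be a finite directed graph with no loops and nonempty vertex set, and let J_1,…,J_m be the strongly connected components of G that are wells of its condensation. Then Σ over ideals J of G whose restriction has all connected components strongly connected of (-1)^{cc(G restricted to J)} = Σ_{S ⊆ [m]} (-1)^{|S|} = 0, where cc denotes the number of connected components of the underlying undirected graph. In particular the character identity μ_1 * μ_sc = ε holds for nonempty directed graphs: the signed count of such ideals vanishes. -/
/-- The setoid on vertices whose classes are the strongly connected components of a
directed graph given by the relation `rel`. -/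
def sccSetoid {V : Type} (rel : V → V → Prop) : Setoid V :=
  ⟨fun x y => Relation.ReflTransGen rel x y ∧ Relation.ReflTransGen rel y x,
   ⟨fun _ => ⟨.refl, .refl⟩, fun h => ⟨h.2, h.1⟩,
    fun h1 h2 => ⟨h1.1.trans h2.1, h2.2.trans h1.2⟩⟩⟩

/-- The arc relation of the condensation: an arc from the component `C` to the
component `D ≠ C` whenever some arc of the graph goes from `C` to `D`. -/
def condRel {V : Type} (rel : V → V → Prop) (C D : Quotient (sccSetoid rel)) : Prop :=
  C ≠ D ∧ ∃ x y : V, Quotient.mk (sccSetoid rel) x = C ∧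
    Quotient.mk (sccSetoid rel) y = D ∧ rel x y

/-- `J` is an ideal of the directed graph, all of whose connected components (for the
underlying undirected graph of the restriction to `J`) are strongly connected. -/
def GoodIdeal {V : Type} (rel : V → V → Prop) (J : Set V) : Prop :=
  (∀ x y : V, x ∈ J → rel x y → y ∈ J) ∧
  ∀ x y : V, x ∈ J → y ∈ J →
    Relation.ReflTransGen (fun a b => a ∈ J ∧ b ∈ J ∧ (rel a b ∨ rel b a)) x y →
    Relation.ReflTransGen (fun a b => a ∈ J ∧ b ∈ J ∧ rel a b) x y

/-- The number of connected components of the underlying undirected graph of the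
induced directed subgraph on `J`. -/
noncomputable def ccRestrict {V : Type} (rel : V → V → Prop) (J : Set V) : ℕ :=
  Nat.card (Quotient (Relation.EqvGen.setoid (fun a b : J => rel a b ∨ rel b a)))

section Aux

open scoped Classical

variable {V : Type} (rel : V → V → Prop)

/-- A "well": a nonempty, strongly connected ideal (automatically an SCC which is a
well of the condensation). -/
def IsWellSet [Fintype V] (C : Finset V) : Prop :=
  C.Nonempty ∧ (∀ x ∈ C, ∀ y, rel x y → y ∈ C) ∧
    (∀ x ∈ C, ∀ y ∈ C, Relation.ReflTransGen rel x y)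

variable {rel}

lemma ideal_mem_of_reach {C : Finset V} (hI : ∀ x ∈ C, ∀ y, rel x y → y ∈ C)
    {x y : V} (hx : x ∈ C) (h : Relation.ReflTransGen rel x y) : y ∈ C := by
  induction h with
  | refl => exact hx
  | tail _ hbc ih => exact hI _ ih _ hbc

lemma reach_restrict {C : Finset V} (hI : ∀ x ∈ C, ∀ y, rel x y → y ∈ C)
    {x y : V} (hx : x ∈ C) (h : Relation.ReflTransGen rel x y) :
    Relation.ReflTransGen (fun a b => a ∈ C ∧ b ∈ C ∧ rel a b) x y := by
  induction h with
  | refl => exact .refl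
  | tail hxb hbc ih =>
      exact ih.tail ⟨ideal_mem_of_reach hI hx hxb,
        hI _ (ideal_mem_of_reach hI hx hxb) _ hbc, hbc⟩

lemma rtg_symm {r : V → V → Prop} (hs : ∀ a b, r a b → r b a) {x y : V}
    (h : Relation.ReflTransGen r x y) : Relation.ReflTransGen r y x := by
  induction h with
  | refl => exact .refl
  | tail _ hbc ih => exact Relation.ReflTransGen.head (hs _ _ hbc) ih

lemma wellSet_eq [Fintype V] {C D : Finset V} (hC : IsWellSet rel C) (hD : IsWellSet rel D)
    {x : V} (hxC : x ∈ C) (hxD : x ∈ D) : C = D := by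
  apply Finset.Subset.antisymm
  · intro y hy; exact ideal_mem_of_reach hD.2.1 hxD (hC.2.2 x hxC y hy)
  · intro y hy; exact ideal_mem_of_reach hC.2.1 hxC (hD.2.2 x hxD y hy)

lemma exists_wellSet [Fintype V] [Nonempty V] : ∃ C, IsWellSet rel C := by
  obtain ⟨x, -, hx⟩ := Finset.exists_min_image Finset.univ
    (fun x => (Finset.univ.filter (fun y => Relation.ReflTransGen rel x y)).card)
    ⟨Classical.arbitrary V, Finset.mem_univ _⟩
  refine ⟨Finset.univ.filter (fun y => Relation.ReflTransGen rel x y),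
    ⟨x, Finset.mem_filter.2 ⟨Finset.mem_univ _, .refl⟩⟩, ?_, ?_⟩
  · intro a ha y hay
    simp only [Finset.mem_filter, Finset.mem_univ, true_and] at *
    exact ha.tail hay
  · have key : ∀ y, Relation.ReflTransGen rel x y → Relation.ReflTransGen rel y x := by
      intro y hy
      have hsub : (Finset.univ.filter fun z => Relation.ReflTransGen rel y z) ⊆
          Finset.univ.filter fun z => Relation.ReflTransGen rel x z := by
        intro z hz
        simp only [Finset.mem_filter, Finset.mem_univ, true_and] at *
        exact hy.trans hz
      have heq := Finset.eq_of_subset_of_card_le hsub (hx y (Finset.mem_univ _))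
      have hxmem : x ∈ Finset.univ.filter fun z => Relation.ReflTransGen rel y z := by
        rw [heq]
        exact Finset.mem_filter.2 ⟨Finset.mem_univ _, .refl⟩
      exact (Finset.mem_filter.1 hxmem).2
    intro a ha b hb
    simp only [Finset.mem_filter, Finset.mem_univ, true_and] at ha hb
    exact (key a ha).trans hb

lemma eqvGen_of_restricted {J : Finset V} {x y : V}
    (h : Relation.ReflTransGen
      (fun a b => a ∈ (↑J : Set V) ∧ b ∈ (↑J : Set V) ∧ rel a b) x y)
    (hx : x ∈ (↑J : Set V)) :
    ∀ hy : y ∈ (↑J : Set V),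
      Relation.EqvGen (fun a b : (↑J : Set V) => rel ↑a ↑b ∨ rel ↑b ↑a) ⟨x, hx⟩ ⟨y, hy⟩ := by
  induction h with
  | refl => intro hy; exact .refl _
  | @tail b c hxb hbc ih =>
      intro hy
      refine .trans _ ⟨b, hbc.1⟩ _ (ih hbc.1) (.rel _ _ ?_)
      exact Or.inl hbc.2.2

lemma eqvGen_mem_iff [Fintype V] {S : Finset (Finset V)}
    (hS : ∀ C ∈ S, IsWellSet rel C) {J : Finset V} (hJ : J = S.biUnion id)
    {a b : (↑J : Set V)}
    (h : Relation.EqvGen (fun a b : (↑J : Set V) => rel ↑a ↑b ∨ rel ↑b ↑a) a b)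
    {C : Finset V} (hC : C ∈ S) : (↑a : V) ∈ C ↔ (↑b : V) ∈ C := by
  have hcover : ∀ v : V, v ∈ (↑J : Set V) → ∃ D ∈ S, v ∈ D := by
    intro v hv
    rw [hJ] at hv
    exact Finset.mem_biUnion.1 (Finset.mem_coe.1 hv)
  induction h with
  | refl => exact Iff.rfl
  | symm _ _ _ ih => exact ih.symm
  | trans _ _ _ _ _ ih1 ih2 => exact ih1.trans ih2
  | rel p q hpq =>
      have hp : ∃ D ∈ S, (↑p : V) ∈ D := hcover _ p.2
      have hq : ∃ D ∈ S, (↑q : V) ∈ D := hcover _ q.2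
      constructor
      · intro hpC
        rcases hpq with h1 | h1
        · exact (hS C hC).2.1 _ hpC _ h1
        · obtain ⟨D, hD, hqD⟩ := hq
          have hpD : (↑p : V) ∈ D := (hS D hD).2.1 _ hqD _ h1
          rwa [wellSet_eq (hS C hC) (hS D hD) hpC hpD]
      · intro hqC
        rcases hpq with h1 | h1
        · obtain ⟨D, hD, hpD⟩ := hp
          have hqD : (↑q : V) ∈ D := (hS D hD).2.1 _ hpD _ h1
          rwa [wellSet_eq (hS C hC) (hS D hD) hqC hqD]
        · exact (hS C hC).2.1 _ hqC _ h1

lemma goodIdeal_biUnion [Fintype V] {S : Finset (Finset V)}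
    (hS : ∀ C ∈ S, IsWellSet rel C) :
    GoodIdeal rel (↑(S.biUnion id) : Set V) := by
  have hmem : ∀ x : V, x ∈ (↑(S.biUnion id) : Set V) ↔ ∃ C ∈ S, x ∈ C := by
    intro x
    simp [Finset.mem_biUnion]
  constructor
  · intro x y hx hxy
    obtain ⟨C, hC, hxC⟩ := (hmem x).1 hx
    exact (hmem y).2 ⟨C, hC, (hS C hC).2.1 _ hxC _ hxy⟩
  · intro x y hx hy hpath
    obtain ⟨C, hC, hxC⟩ := (hmem x).1 hx
    -- every vertex connected (undirectedly within J) to x stays in C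
    have hstay : ∀ z : V,
        Relation.ReflTransGen (fun a b => a ∈ (↑(S.biUnion id) : Set V) ∧
          b ∈ (↑(S.biUnion id) : Set V) ∧ (rel a b ∨ rel b a)) x z → z ∈ C := by
      intro z hz
      induction hz with
      | refl => exact hxC
      | tail _ hbc ih =>
          rcases hbc.2.2 with h1 | h1
          · exact (hS C hC).2.1 _ ih _ h1
          · obtain ⟨D, hD, hcD⟩ := (hmem _).1 hbc.2.1
            have hbD := (hS D hD).2.1 _ hcD _ h1
            rwa [wellSet_eq (hS C hC) (hS D hD) ih hbD]
    have hyC : y ∈ C := hstay y hpath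
    have hreach : Relation.ReflTransGen rel x y := (hS C hC).2.2 x hxC y hyC
    have := reach_restrict (hS C hC).2.1 hxC hreach
    refine Relation.ReflTransGen.mono ?_ _ _ this
    intro a b hab
    exact ⟨(hmem a).2 ⟨C, hC, hab.1⟩, (hmem b).2 ⟨C, hC, hab.2.1⟩, hab.2.2⟩

lemma cc_biUnion [Fintype V] {S : Finset (Finset V)}
    (hS : ∀ C ∈ S, IsWellSet rel C) :
    ccRestrict rel (↑(S.biUnion id) : Set V) = S.card := by
  set J : Finset V := S.biUnion id with hJdef
  have hmem : ∀ x : V, x ∈ (↑J : Set V) ↔ ∃ C ∈ S, x ∈ C := by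
    intro x; simp [hJdef, Finset.mem_biUnion]
  -- the chosen basepoint of each well
  have hpt : ∀ C : {C // C ∈ S}, (hS C.1 C.2).1.choose ∈ C.1 :=
    fun C => (hS C.1 C.2).1.choose_spec
  let f : {C // C ∈ S} →
      Quotient (Relation.EqvGen.setoid
        (fun a b : (↑J : Set V) => rel ↑a ↑b ∨ rel ↑b ↑a)) :=
    fun C => Quotient.mk _ ⟨(hS C.1 C.2).1.choose, (hmem _).2 ⟨C.1, C.2, hpt C⟩⟩
  have key : ∀ (x : V) (hx : x ∈ (↑J : Set V)) (C : Finset V) (hC : C ∈ S), x ∈ C →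
      f ⟨C, hC⟩ = Quotient.mk _ ⟨x, hx⟩ := by
    intro x hx C hC hxC
    apply Quotient.sound
    have hreach : Relation.ReflTransGen rel (hS C hC).1.choose x :=
      (hS C hC).2.2 _ ((hS C hC).1.choose_spec) _ hxC
    have hres := reach_restrict (hS C hC).2.1 ((hS C hC).1.choose_spec) hreach
    have hres' : Relation.ReflTransGen
        (fun a b => a ∈ (↑J : Set V) ∧ b ∈ (↑J : Set V) ∧ rel a b)
        (hS C hC).1.choose x := by
      refine Relation.ReflTransGen.mono ?_ _ _ hres
      intro a b hab
      exact ⟨(hmem a).2 ⟨C, hC, hab.1⟩, (hmem b).2 ⟨C, hC, hab.2.1⟩, hab.2.2⟩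
    exact eqvGen_of_restricted hres' _ hx
  have hbij : Function.Bijective f := by
    constructor
    · intro C D hfCD
      have hEq := Quotient.exact hfCD
      have hiff := eqvGen_mem_iff hS hJdef hEq (C := C.1) C.2
      have hpD : (hS D.1 D.2).1.choose ∈ C.1 := hiff.1 (hpt C)
      exact Subtype.ext (wellSet_eq (hS C.1 C.2) (hS D.1 D.2) hpD (hpt D))
    · intro q
      induction q using Quotient.ind with
      | _ a =>
        obtain ⟨x, hx⟩ := a
        obtain ⟨C, hC, hxC⟩ := (hmem x).1 hx
        exact ⟨⟨C, hC⟩, key x hx C hC hxC⟩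
  have h1 : Nat.card {C // C ∈ S} = ccRestrict rel (↑J : Set V) :=
    Nat.card_eq_of_bijective f hbij
  rw [← h1, Nat.card_eq_fintype_card, Fintype.card_coe]

lemma goodIdeal_eq_biUnion [Fintype V] {J : Finset V}
    (hJ : GoodIdeal rel (↑J : Set V)) :
    ∃ S : Finset (Finset V), (∀ C ∈ S, IsWellSet rel C) ∧ J = S.biUnion id := by
  set symJ : V → V → Prop :=
    fun a b => a ∈ (↑J : Set V) ∧ b ∈ (↑J : Set V) ∧ (rel a b ∨ rel b a) with hsymJ
  have hsym : ∀ a b, symJ a b → symJ b a := by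
    intro a b h; exact ⟨h.2.1, h.1, h.2.2.symm⟩
  set comp : V → Finset V :=
    fun x => J.filter (fun y => Relation.ReflTransGen symJ x y) with hcomp
  refine ⟨J.image comp, ?_, ?_⟩
  · intro C hC
    obtain ⟨x, hx, rfl⟩ := Finset.mem_image.1 hC
    refine ⟨⟨x, ?_⟩, ?_, ?_⟩
    · simp only [hcomp, Finset.mem_filter]
      exact ⟨hx, .refl⟩
    · intro y hy z hyz
      simp only [hcomp, Finset.mem_filter] at hy ⊢
      have hzJ : z ∈ J := by
        have := hJ.1 y z (by simpa using hy.1) hyz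
        simpa using this
      exact ⟨hzJ, hy.2.tail ⟨by simpa using hy.1, by simpa using hzJ, Or.inl hyz⟩⟩
    · intro y hy z hz
      simp only [hcomp, Finset.mem_filter] at hy hz
      have hyz : Relation.ReflTransGen symJ y z := (rtg_symm hsym hy.2).trans hz.2
      have := hJ.2 y z (by simpa using hy.1) (by simpa using hz.1) hyz
      exact Relation.ReflTransGen.mono (fun a b hab => hab.2.2) _ _ this
  · ext x
    simp only [Finset.mem_biUnion, Finset.mem_image, id]
    constructor
    · intro hx
      refine ⟨comp x, ⟨x, hx, rfl⟩, ?_⟩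
      simp only [hcomp, Finset.mem_filter]
      exact ⟨hx, .refl⟩
    · rintro ⟨C, ⟨y, hy, rfl⟩, hxC⟩
      simp only [hcomp, Finset.mem_filter] at hxC
      exact hxC.1

lemma biUnion_inj_aux [Fintype V] {S T : Finset (Finset V)}
    (hS : ∀ C ∈ S, IsWellSet rel C) (hT : ∀ C ∈ T, IsWellSet rel C)
    (h : S.biUnion id = T.biUnion id) {C : Finset V} (hC : C ∈ S) : C ∈ T := by
  obtain ⟨p, hp⟩ := (hS C hC).1
  have hpS : p ∈ S.biUnion id := Finset.mem_biUnion.2 ⟨C, hC, hp⟩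
  rw [h] at hpS
  obtain ⟨D, hD, hpD⟩ := Finset.mem_biUnion.1 hpS
  rwa [wellSet_eq (hS C hC) (hT D hD) hp hpD]

end Aux

open scoped Classical in
/-- For a nonempty finite loopless directed graph, the signed count over ideals whose
connected components are all strongly connected vanishes: `μ₁ * μ_sc = ε`. -/
theorem signed_count_good_ideals_vanishes {V : Type} [Fintype V] [Nonempty V]
    (rel : V → V → Prop) (hirr : ∀ x, ¬ rel x x) :
    ∑ J : Finset V,
      (if GoodIdeal rel (↑J : Set V) then (-1 : ℤ) ^ ccRestrict rel (↑J : Set V) else 0)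
      = 0 := by
  classical
  set wells : Finset (Finset V) :=
    Finset.univ.filter (fun C => IsWellSet rel C) with hwells
  have hwmem : ∀ C, C ∈ wells ↔ IsWellSet rel C := by
    intro C; simp [hwells]
  have hwne : wells.Nonempty := by
    obtain ⟨C, hC⟩ := exists_wellSet (rel := rel)
    exact ⟨C, (hwmem C).2 hC⟩
  rw [← Finset.sum_filter]
  have h2 : ∑ S ∈ wells.powerset, (-1 : ℤ) ^ S.card
      = ∑ J ∈ Finset.univ.filter (fun J : Finset V => GoodIdeal rel (↑J : Set V)),
          (-1 : ℤ) ^ ccRestrict rel (↑J : Set V) := by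
    refine Finset.sum_bij (fun S _ => S.biUnion id) ?_ ?_ ?_ ?_
    · intro S hS
      have hS' : ∀ C ∈ S, IsWellSet rel C :=
        fun C hC => (hwmem C).1 (Finset.mem_powerset.1 hS hC)
      simp only [Finset.mem_filter, Finset.mem_univ, true_and]
      exact goodIdeal_biUnion hS'
    · intro S hSm T hTm h
      exact Finset.Subset.antisymm
        (fun C hC => biUnion_inj_aux
          (fun C hC => (hwmem C).1 (Finset.mem_powerset.1 hSm hC))
          (fun C hC => (hwmem C).1 (Finset.mem_powerset.1 hTm hC)) h hC)
        (fun C hC => biUnion_inj_aux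
          (fun C hC => (hwmem C).1 (Finset.mem_powerset.1 hTm hC))
          (fun C hC => (hwmem C).1 (Finset.mem_powerset.1 hSm hC)) h.symm hC)
    · intro J hJ
      simp only [Finset.mem_filter, Finset.mem_univ, true_and] at hJ
      obtain ⟨S, hS, hJS⟩ := goodIdeal_eq_biUnion hJ
      refine ⟨S, Finset.mem_powerset.2 (fun C hC => (hwmem C).2 (hS C hC)), hJS.symm⟩
    · intro S hS
      have hS' : ∀ C ∈ S, IsWellSet rel C :=
        fun C hC => (hwmem C).1 (Finset.mem_powerset.1 hS hC)
      rw [cc_biUnion hS']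
  rw [← h2]
  exact Finset.sum_powerset_neg_one_pow_card_of_nonempty hwne
end

section
/- Let G be a finite simple graph. The map sending a totally acyclic partial orientation H of G to the pair (∼_H, H/∼_H), where ∼_H is the partition of V(G) into connected components of the undirected part gr_0(H) of H, and H/∼_H is the induced orientation on the quotient graph G/∼_H, is a bijection between the set of totally acyclic partial orientations of G and the set of pairs (∼, ω) where ∼ is a partition of V(G) into connected subsets (each class induces a connected subgraph of G) and ω is an acyclic orientation of the contracted graph G/∼. -/
/-- A partial orientation (mixed graph) over the simple graph `G`: some edges of `G`
are given a direction (`dir`), the others stay undirected. -/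
structure PartialOrientation {V : Type} (G : SimpleGraph V) where
  dir : V → V → Prop
  dir_adj : ∀ v w, dir v w → G.Adj v w
  not_both : ∀ v w, dir v w → ¬ dir w v

/-- The undirected part `gr_0(H)` of a partial orientation: the edges of `G` left
undirected in `H`. -/
def gr0 {V : Type} {G : SimpleGraph V} (H : PartialOrientation G) : SimpleGraph V where
  Adj v w := G.Adj v w ∧ ¬ H.dir v w ∧ ¬ H.dir w v
  symm := ⟨fun v w h => ⟨h.1.symm, h.2.2, h.2.1⟩⟩
  loopless := ⟨fun v h => G.loopless.irrefl v h.1⟩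

/-- A partial orientation is totally acyclic if there is no closed walk, traversing
undirected edges in either direction and arcs in their direction, using at least one
arc. -/
def TotallyAcyclic {V : Type} {G : SimpleGraph V} (H : PartialOrientation G) : Prop :=
  ∀ v w, H.dir v w → ¬ Relation.ReflTransGen (fun a b => G.Adj a b ∧ ¬ H.dir b a) w v

/-- Every class of the setoid `s` induces a connected subgraph of `G`. -/
def ConnClasses {V : Type} (G : SimpleGraph V) (s : Setoid V) : Prop :=
  ∀ x y, s.r x y →
    Relation.ReflTransGen (fun a b => G.Adj a b ∧ s.r x a ∧ s.r x b) x y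

/-- The contraction `G/∼` of `G` along a setoid: the simple graph on the classes, two
distinct classes being adjacent when some edge of `G` joins them. -/
def contractGraph {V : Type} (G : SimpleGraph V) (s : Setoid V) :
    SimpleGraph (Quotient s) where
  Adj C D := C ≠ D ∧ ∃ x y : V, Quotient.mk s x = C ∧ Quotient.mk s y = D ∧ G.Adj x y
  symm := ⟨fun C D h => ⟨h.1.symm, by obtain ⟨x, y, hx, hy, hxy⟩ := h.2; exact ⟨y, x, hy, hx, hxy.symm⟩⟩⟩
  loopless := ⟨fun C h => h.1 rfl⟩

/-- An orientation is acyclic if it has no directed cycle. -/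
def AcyclicO {V : Type} {G : SimpleGraph V} (O : GraphOrientation G) : Prop :=
  ∀ v w, O.rel v w → ¬ Relation.ReflTransGen O.rel w v

namespace TAPOProof

variable {V : Type} {G : SimpleGraph V}

lemma PO_ext {H H' : PartialOrientation G} (h : H.dir = H'.dir) : H = H' := by
  cases H; cases H'; cases h; rfl

lemma GO_ext {W : Type} {Gw : SimpleGraph W} {O O' : GraphOrientation Gw}
    (h : O.rel = O'.rel) : O = O' := by
  cases O; cases O'; cases h; rfl

/-- A single permitted step in a partial orientation. -/
def pstep (H : PartialOrientation G) (a b : V) : Prop := G.Adj a b ∧ ¬ H.dir b a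

lemma reach_step {H : PartialOrientation G} {a b : V} (h : (gr0 H).Reachable a b) :
    Relation.ReflTransGen (pstep H) a b := by
  rw [SimpleGraph.reachable_iff_reflTransGen] at h
  exact Relation.ReflTransGen.mono (by intro x y hxy; exact ⟨hxy.1, hxy.2.2⟩) _ _ h

/-- The setoid of connected components of the undirected part. -/
abbrev sOf (H : PartialOrientation G) : Setoid V := (gr0 H).reachableSetoid

lemma sOf_r {H : PartialOrientation G} {a b : V} :
    (sOf H).r a b ↔ (gr0 H).Reachable a b := Iff.rfl

lemma connOf (H : PartialOrientation G) : ConnClasses G (sOf H) := by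
  intro x y hxy
  have h : Relation.ReflTransGen (gr0 H).Adj x y :=
    ((gr0 H).reachable_iff_reflTransGen x y).mp hxy
  clear hxy
  induction h with
  | refl => exact .refl
  | @tail b c hab hbc ih =>
      exact ih.tail ⟨hbc.1, ((gr0 H).reachable_iff_reflTransGen x b).mpr hab,
        (((gr0 H).reachable_iff_reflTransGen x b).mpr hab).trans hbc.reachable⟩

/-- The induced relation on the quotient. -/
def relOf (H : PartialOrientation G) (s : Setoid V) (C D : Quotient s) : Prop :=
  C ≠ D ∧ ∃ x y : V, Quotient.mk s x = C ∧ Quotient.mk s y = D ∧ H.dir x y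

lemma no_two {H : PartialOrientation G} (hTA : TotallyAcyclic H) {C D : Quotient (sOf H)}
    (h1 : relOf H (sOf H) C D) (h2 : relOf H (sOf H) D C) : False := by
  obtain ⟨-, x, y, hx, hy, hd⟩ := h1
  obtain ⟨-, y', x', hy', hx', hd'⟩ := h2
  have hyy' : (gr0 H).Reachable y y' := Quotient.exact (hy.trans hy'.symm)
  have hx'x : (gr0 H).Reachable x' x := Quotient.exact (hx'.trans hx.symm)
  exact hTA x y hd (((reach_step hyy').tail
    ⟨H.dir_adj _ _ hd', H.not_both _ _ hd'⟩).trans (reach_step hx'x))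

lemma dir_ne {H : PartialOrientation G} (hTA : TotallyAcyclic H) {v w : V}
    (h : H.dir v w) : Quotient.mk (sOf H) v ≠ Quotient.mk (sOf H) w := by
  intro hEq
  exact hTA v w h (reach_step (Quotient.exact hEq).symm)

/-- The induced orientation of the contracted graph. -/
def orOf (H : PartialOrientation G) (hTA : TotallyAcyclic H) :
    GraphOrientation (contractGraph G (sOf H)) where
  rel := relOf H (sOf H)
  sub := fun C D h => ⟨h.1, by
    obtain ⟨x, y, hx, hy, hd⟩ := h.2
    exact ⟨x, y, hx, hy, H.dir_adj _ _ hd⟩⟩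
  exactlyOne := by
    intro C D hCD
    constructor
    · exact fun h h' => no_two hTA h h'
    · intro hn
      obtain ⟨hne, x, y, hx, hy, hadj⟩ := hCD
      by_cases h1 : H.dir x y
      · exact ⟨hne, x, y, hx, hy, h1⟩
      by_cases h2 : H.dir y x
      · exact absurd ⟨hne.symm, y, x, hy, hx, h2⟩ hn
      · exact absurd (hx.symm.trans ((Quotient.sound
          (SimpleGraph.Adj.reachable (⟨hadj, h1, h2⟩ : (gr0 H).Adj x y))).trans hy))
          hne

lemma rtg_lift {H : PartialOrientation G} {C D : Quotient (sOf H)}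
    (h : Relation.ReflTransGen (relOf H (sOf H)) C D) :
    ∀ x y : V, Quotient.mk (sOf H) x = C → Quotient.mk (sOf H) y = D →
      Relation.ReflTransGen (pstep H) x y := by
  induction h with
  | refl => exact fun x y hx hy => reach_step (Quotient.exact (hx.trans hy.symm))
  | @tail B D hCB hBD ih =>
      intro x y hx hy
      obtain ⟨-, x', y', hx', hy', hd⟩ := hBD
      exact ((ih x x' hx hx').tail ⟨H.dir_adj _ _ hd, H.not_both _ _ hd⟩).trans
        (reach_step (Quotient.exact (hy'.trans hy.symm)))

lemma acOf (H : PartialOrientation G) (hTA : TotallyAcyclic H) : AcyclicO (orOf H hTA) := by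
  intro C D h hR
  obtain ⟨-, x, y, hx, hy, hd⟩ := h
  exact hTA x y hd (rtg_lift hR y x hy hx)

lemma dir_char {H : PartialOrientation G} (hTA : TotallyAcyclic H) (v w : V) :
    H.dir v w ↔ G.Adj v w ∧
      relOf H (sOf H) (Quotient.mk (sOf H) v) (Quotient.mk (sOf H) w) := by
  constructor
  · intro h
    exact ⟨H.dir_adj _ _ h, dir_ne hTA h, v, w, rfl, rfl, h⟩
  · rintro ⟨hadj, hrel⟩
    by_cases h1 : H.dir v w
    · exact h1
    by_cases h2 : H.dir w v
    · exact absurd (no_two hTA hrel ⟨hrel.1.symm, w, v, rfl, rfl, h2⟩) not_false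
    · exact absurd (Quotient.sound (SimpleGraph.Adj.reachable
        (⟨hadj, h1, h2⟩ : (gr0 H).Adj v w))) hrel.1

section Backward

variable (s : Setoid V) (O : GraphOrientation (contractGraph G s))

lemma rel_irrefl (hO : AcyclicO O) (C : Quotient s) : ¬ O.rel C C :=
  fun h => hO C C h .refl

lemma rel_asymm (hO : AcyclicO O) {C D : Quotient s} (h : O.rel C D) : ¬ O.rel D C :=
  fun h' => hO C D h (.single h')

variable (G) in
/-- The partial orientation reconstructed from a setoid and an orientation of the
contraction. -/
def bwd (hO : AcyclicO O) : PartialOrientation G where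
  dir v w := G.Adj v w ∧ O.rel (Quotient.mk s v) (Quotient.mk s w)
  dir_adj := fun _ _ h => h.1
  not_both := fun _ _ h h' => rel_asymm s O hO h.2 h'.2

lemma bwd_gr0 (hO : AcyclicO O) (v w : V) :
    (gr0 (bwd G s O hO)).Adj v w ↔ G.Adj v w ∧ s.r v w := by
  constructor
  · rintro ⟨hadj, h1, h2⟩
    refine ⟨hadj, ?_⟩
    by_contra hr
    have hne : Quotient.mk s v ≠ Quotient.mk s w := fun h => hr (Quotient.exact h)
    have hCD : (contractGraph G s).Adj (Quotient.mk s v) (Quotient.mk s w) :=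
      ⟨hne, v, w, rfl, rfl, hadj⟩
    by_cases h : O.rel (Quotient.mk s v) (Quotient.mk s w)
    · exact h1 ⟨hadj, h⟩
    · have hwv : O.rel (Quotient.mk s w) (Quotient.mk s v) := by
        by_contra hc
        exact h ((O.exactlyOne _ _ hCD).mpr hc)
      exact h2 ⟨hadj.symm, hwv⟩
  · rintro ⟨hadj, hr⟩
    have hEq : Quotient.mk s v = Quotient.mk s w := Quotient.sound hr
    refine ⟨hadj, fun h => ?_, fun h => ?_⟩
    · exact rel_irrefl s O hO _ (hEq ▸ h.2)
    · exact rel_irrefl s O hO _ (hEq ▸ h.2)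

lemma bwd_step_lift (hO : AcyclicO O) {a b : V} (h : pstep (bwd G s O hO) a b) :
    Relation.ReflTransGen O.rel (Quotient.mk s a) (Quotient.mk s b) := by
  by_cases hr : s.r a b
  · rw [Quotient.sound hr]
  · have hne : Quotient.mk s a ≠ Quotient.mk s b := fun hE => hr (Quotient.exact hE)
    have hCD : (contractGraph G s).Adj (Quotient.mk s a) (Quotient.mk s b) :=
      ⟨hne, a, b, rfl, rfl, h.1⟩
    have hnb : ¬ O.rel (Quotient.mk s b) (Quotient.mk s a) := fun hrel =>
      h.2 ⟨h.1.symm, hrel⟩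
    exact .single ((O.exactlyOne _ _ hCD).mpr hnb)

lemma bwd_TA (hO : AcyclicO O) : TotallyAcyclic (bwd G s O hO) := by
  intro v w hd hR
  have key : ∀ {a b : V}, Relation.ReflTransGen (pstep (bwd G s O hO)) a b →
      Relation.ReflTransGen O.rel (Quotient.mk s a) (Quotient.mk s b) := by
    intro a b h
    induction h with
    | refl => exact .refl
    | tail _ hbc ih => exact ih.trans (bwd_step_lift s O hO hbc)
  have hR' : Relation.ReflTransGen (pstep (bwd G s O hO)) w v := by
    refine Relation.ReflTransGen.mono (by intro a b hab; exact ⟨hab.1, hab.2⟩) _ _ hR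
  exact hO _ _ hd.2 (key hR')

lemma bwd_setoid (hO : AcyclicO O) (hs : ConnClasses G s) (a b : V) :
    (sOf (bwd G s O hO)).r a b ↔ s.r a b := by
  constructor
  · intro h
    have h' : Relation.ReflTransGen (gr0 (bwd G s O hO)).Adj a b :=
      ((gr0 (bwd G s O hO)).reachable_iff_reflTransGen a b).mp h
    clear h
    induction h' with
    | refl => exact Setoid.refl a
    | tail _ hbc ih => exact Setoid.trans ih ((bwd_gr0 s O hO _ _).mp hbc).2
  · intro h
    have h' := hs a b h
    have h'' : Relation.ReflTransGen (gr0 (bwd G s O hO)).Adj a b :=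
      Relation.ReflTransGen.mono (by intro x y hxy; exact (bwd_gr0 s O hO x y).mpr ⟨hxy.1, Setoid.trans (Setoid.symm hxy.2.1) hxy.2.2⟩)
        _ _ h'
    exact ((gr0 (bwd G s O hO)).reachable_iff_reflTransGen a b).mpr h''

end Backward

lemma pair_eq (s t : Setoid V) (hs : ConnClasses G s) (ht : ConnClasses G t)
    (h : s = t)
    (O : GraphOrientation (contractGraph G s)) (hO : AcyclicO O)
    (O' : GraphOrientation (contractGraph G t)) (hO' : AcyclicO O')
    (hrel : ∀ x y : V, O.rel (Quotient.mk s x) (Quotient.mk s y) ↔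
      O'.rel (Quotient.mk t x) (Quotient.mk t y)) :
    (⟨⟨s, hs⟩, ⟨O, hO⟩⟩ : Σ s : {s : Setoid V // ConnClasses G s},
      {O : GraphOrientation (contractGraph G s.1) // AcyclicO O}) = ⟨⟨t, ht⟩, ⟨O', hO'⟩⟩ := by
  subst h
  have hrr : O = O' := by
    apply GO_ext
    funext C D
    induction C using Quotient.ind with | _ x =>
    induction D using Quotient.ind with | _ y =>
    exact propext (hrel x y)
  subst hrr
  rfl

end TAPOProof

/-- The map sending a totally acyclic partial orientation H of G to the pair of the
partition of V(G) into connected components of gr_0(H) and the induced acyclic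
orientation of the contracted graph is a bijection onto the pairs of a connected
partition and an acyclic orientation of the contraction. -/
theorem totally_acyclic_partial_orientations_bijection {V : Type} [Fintype V]
    (G : SimpleGraph V) :
    ∃ Φ : {H : PartialOrientation G // TotallyAcyclic H} →
        (Σ s : {s : Setoid V // ConnClasses G s},
          {O : GraphOrientation (contractGraph G s.1) // AcyclicO O}),
      Function.Bijective Φ ∧
      ∀ H, ((Φ H).1.1 = (gr0 H.1).reachableSetoid ∧
        ∀ C D, (Φ H).2.1.rel C D ↔
          (C ≠ D ∧ ∃ x y : V, Quotient.mk (Φ H).1.1 x = C ∧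
            Quotient.mk (Φ H).1.1 y = D ∧ H.1.dir x y)) := by
  classical
  open TAPOProof in
  refine ⟨fun H => ⟨⟨sOf H.1, connOf H.1⟩, ⟨orOf H.1 H.2, acOf H.1 H.2⟩⟩, ?_, ?_⟩
  · have hleft : Function.LeftInverse
        (fun p : (Σ s : {s : Setoid V // ConnClasses G s},
            {O : GraphOrientation (contractGraph G s.1) // AcyclicO O}) =>
          (⟨bwd G p.1.1 p.2.1 p.2.2, bwd_TA p.1.1 p.2.1 p.2.2⟩ :
            {H : PartialOrientation G // TotallyAcyclic H}))
        (fun H => ⟨⟨sOf H.1, connOf H.1⟩, ⟨orOf H.1 H.2, acOf H.1 H.2⟩⟩) := by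
      rintro ⟨H, hTA⟩
      apply Subtype.ext
      apply PO_ext
      funext v w
      apply propext
      constructor
      · intro h
        exact (dir_char hTA v w).mpr ⟨h.1, h.2⟩
      · intro h
        exact ⟨H.dir_adj _ _ h, ((dir_char hTA v w).mp h).2⟩
    have hright : Function.RightInverse
        (fun p : (Σ s : {s : Setoid V // ConnClasses G s},
            {O : GraphOrientation (contractGraph G s.1) // AcyclicO O}) =>
          (⟨bwd G p.1.1 p.2.1 p.2.2, bwd_TA p.1.1 p.2.1 p.2.2⟩ :
            {H : PartialOrientation G // TotallyAcyclic H}))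
        (fun H => ⟨⟨sOf H.1, connOf H.1⟩, ⟨orOf H.1 H.2, acOf H.1 H.2⟩⟩) := by
      rintro ⟨⟨s, hs⟩, ⟨O, hO⟩⟩
      have hsetoid : sOf (bwd G s O hO) = s :=
        Setoid.ext (bwd_setoid s O hO hs)
      refine pair_eq _ _ _ _ hsetoid _ _ _ _ ?_
      intro x y
      constructor
      · rintro ⟨hne, x', y', hx', hy', hd⟩
        have hx : Quotient.mk s x' = Quotient.mk s x :=
          Quotient.sound ((bwd_setoid s O hO hs x' x).mp (Quotient.exact hx'))
        have hy : Quotient.mk s y' = Quotient.mk s y :=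
          Quotient.sound ((bwd_setoid s O hO hs y' y).mp (Quotient.exact hy'))
        exact hx ▸ hy ▸ hd.2
      · intro h
        obtain ⟨hne, x', y', hx', hy', hadj⟩ := O.sub _ _ h
        refine ⟨?_, x', y', ?_, ?_, hadj, hx' ▸ hy' ▸ h⟩
        · intro hE
          have : s.r x y := (bwd_setoid s O hO hs x y).mp (Quotient.exact hE)
          exact rel_irrefl s O hO _ ((Quotient.sound this : Quotient.mk s x = _) ▸ h)
        · exact Quotient.sound ((bwd_setoid s O hO hs x' x).mpr (Quotient.exact hx'))
        · exact Quotient.sound ((bwd_setoid s O hO hs y' y).mpr (Quotient.exact hy'))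
    exact ⟨hleft.injective, hright.surjective⟩
  · intro H
    exact ⟨rfl, fun C D => Iff.rfl⟩
end
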